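/- arXiv:2508.13679 — 12 statements merged into one kernel-verified Lean document; each statement's English description precedes it below -/
import Mathlib

section
/- For every θ ∈ ℝ^d and all a, b ∈ A, if V(p) is invertible then ∑_{a'∈A} p_{a'} · ((φ̄_a − φ̄_b)^⊤ V(p)^{-1} φ̄_{a'}) · (φ_{a'}^⊤ θ) = (φ_a − φ_b)^⊤ θ. Consequently, if a' is drawn from p and the variance-reduced linear loss estimator is ℓ̃_c = φ̄_c^⊤ V(p)^{-1} φ̄_{a'} · (φ_{a'}^⊤ θ) for c ∈ A, then E[ℓ̃_a − ℓ̃_b] = φ_a^⊤θ − φ_b^⊤θ. -/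
open Matrix Finset

/-- Mean feature vector `μ(p) = ∑_a p_a φ_a`. -/
noncomputable def featMean {A : Type*} [Fintype A] {d : ℕ} (φ : A → Fin d → ℝ)
    (p : A → ℝ) : Fin d → ℝ :=
  ∑ a, p a • φ a

/-- Centered feature covariance matrix `V(p) = ∑_a p_a φ̄_a φ̄_a^⊤`, where
`φ̄_a = φ_a − μ(p)`. -/
noncomputable def covMat {A : Type*} [Fintype A] {d : ℕ} (φ : A → Fin d → ℝ)
    (p : A → ℝ) : Matrix (Fin d) (Fin d) ℝ :=
  ∑ a, p a • Matrix.vecMulVec (φ a - featMean φ p) (φ a - featMean φ p)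

private lemma dot_sum' {A : Type*} [Fintype A] {d : ℕ} (x : Fin d → ℝ) (v : A → Fin d → ℝ) :
    x ⬝ᵥ ∑ a, v a = ∑ a, x ⬝ᵥ v a := by
  simp only [dotProduct, Finset.sum_apply, Finset.mul_sum]
  exact Finset.sum_comm

private lemma mulVec_sum' {A : Type*} [Fintype A] {d : ℕ} (M : Matrix (Fin d) (Fin d) ℝ)
    (v : A → Fin d → ℝ) : M *ᵥ ∑ a, v a = ∑ a, M *ᵥ v a := by
  funext i
  simp only [Matrix.mulVec, dotProduct, Finset.sum_apply, Finset.mul_sum]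
  exact Finset.sum_comm

private lemma sum_mulVec' {A : Type*} [Fintype A] {d : ℕ} (M : A → Matrix (Fin d) (Fin d) ℝ)
    (v : Fin d → ℝ) : (∑ a, M a) *ᵥ v = ∑ a, M a *ᵥ v := by
  funext i
  simp only [Matrix.mulVec, dotProduct, Finset.sum_apply, Matrix.sum_apply, Finset.sum_mul]
  exact Finset.sum_comm

private lemma vecMulVec_mulVec' {d : ℕ} (w v x : Fin d → ℝ) :
    Matrix.vecMulVec w v *ᵥ x = (v ⬝ᵥ x) • w := by
  funext i
  simp only [Matrix.mulVec, Matrix.vecMulVec, dotProduct, Pi.smul_apply, smul_eq_mul,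
    Matrix.of_apply]
  rw [Finset.sum_mul]
  exact Finset.sum_congr rfl fun j _ => by ring

lemma covMat_mulVec' {A : Type*} [Fintype A] {d : ℕ} (φ : A → Fin d → ℝ)
    (p : A → ℝ) (hp1 : ∑ a, p a = 1) (θ : Fin d → ℝ) :
    ∑ a' : A, (p a' * (φ a' ⬝ᵥ θ)) • (φ a' - featMean φ p) = covMat φ p *ᵥ θ := by
  have hcent : ∑ a' : A, p a' • (φ a' - featMean φ p) = 0 := by
    simp only [smul_sub, Finset.sum_sub_distrib, ← Finset.sum_smul, hp1, one_smul,
      featMean, sub_self]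
  have hV : covMat φ p *ᵥ θ
      = ∑ a' : A, (p a' * ((φ a' - featMean φ p) ⬝ᵥ θ)) • (φ a' - featMean φ p) := by
    have : covMat φ p *ᵥ θ
        = ∑ a' : A, (p a' • Matrix.vecMulVec (φ a' - featMean φ p) (φ a' - featMean φ p)) *ᵥ θ := by
      rw [covMat, sum_mulVec']
    rw [this]
    refine Finset.sum_congr rfl fun a' _ => ?_
    rw [Matrix.smul_mulVec, vecMulVec_mulVec', smul_smul]
  rw [hV]
  have h : ∀ a' : A, (p a' * (φ a' ⬝ᵥ θ)) • (φ a' - featMean φ p)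
      = (p a' * ((φ a' - featMean φ p) ⬝ᵥ θ)) • (φ a' - featMean φ p)
        + (featMean φ p ⬝ᵥ θ) • (p a' • (φ a' - featMean φ p)) := by
    intro a'
    rw [smul_smul, ← add_smul]
    congr 1
    simp [sub_dotProduct]
    ring
  simp only [h, Finset.sum_add_distrib, ← Finset.smul_sum, hcent, smul_zero, add_zero]

lemma key' {A : Type*} [Fintype A] {d : ℕ}
    (φ : A → Fin d → ℝ) (p : A → ℝ) (hp1 : ∑ a, p a = 1)
    (hV : IsUnit (covMat φ p).det) (θ : Fin d → ℝ) (x : Fin d → ℝ) :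
    ∑ a' : A, p a' * (x ⬝ᵥ ((covMat φ p)⁻¹ *ᵥ (φ a' - featMean φ p))) * (φ a' ⬝ᵥ θ)
      = x ⬝ᵥ θ := by
  have h1 : ∀ a' : A, p a' * (x ⬝ᵥ ((covMat φ p)⁻¹ *ᵥ (φ a' - featMean φ p))) * (φ a' ⬝ᵥ θ)
      = x ⬝ᵥ ((covMat φ p)⁻¹ *ᵥ ((p a' * (φ a' ⬝ᵥ θ)) • (φ a' - featMean φ p))) := by
    intro a'
    rw [Matrix.mulVec_smul, dotProduct_smul]
    simp only [smul_eq_mul]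
    ring
  calc ∑ a' : A, p a' * (x ⬝ᵥ ((covMat φ p)⁻¹ *ᵥ (φ a' - featMean φ p))) * (φ a' ⬝ᵥ θ)
      = ∑ a' : A, x ⬝ᵥ ((covMat φ p)⁻¹ *ᵥ ((p a' * (φ a' ⬝ᵥ θ)) • (φ a' - featMean φ p))) := by
        exact Finset.sum_congr rfl fun a' _ => h1 a'
    _ = x ⬝ᵥ ((covMat φ p)⁻¹ *ᵥ ∑ a' : A, (p a' * (φ a' ⬝ᵥ θ)) • (φ a' - featMean φ p)) := by
        rw [mulVec_sum', dot_sum']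
    _ = x ⬝ᵥ θ := by
        rw [covMat_mulVec' φ p hp1, Matrix.mulVec_mulVec, Matrix.nonsing_inv_mul _ hV,
          Matrix.one_mulVec]

/-- Lemma 9: unbiasedness of loss differences for the variance-reduced
least-squares loss estimator. For every `θ ∈ ℝ^d` and all `a, b ∈ A`, if `V(p)` is invertible
then `∑_{a'} p_{a'} ((φ̄_a − φ̄_b)^⊤ V(p)⁻¹ φ̄_{a'}) (φ_{a'}^⊤ θ) = (φ_a − φ_b)^⊤ θ`.
Consequently, with `ℓ̃_c(a') = φ̄_c^⊤ V(p)⁻¹ φ̄_{a'} (φ_{a'}^⊤ θ)`, drawing `a' ∼ p` gives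
`E[ℓ̃_a − ℓ̃_b] = φ_a^⊤ θ − φ_b^⊤ θ`. -/
theorem vr_estimator_unbiased_difference
    {A : Type*} [Fintype A] [Nonempty A] {d : ℕ} (hd : 1 ≤ d)
    (φ : A → Fin d → ℝ) (p : A → ℝ)
    (hp : ∀ a, 0 ≤ p a) (hp1 : ∑ a, p a = 1)
    (hV : IsUnit (covMat φ p).det)
    (θ : Fin d → ℝ) (a b : A) :
    (∑ a' : A, p a' *
        (((φ a - featMean φ p) - (φ b - featMean φ p)) ⬝ᵥ
          ((covMat φ p)⁻¹ *ᵥ (φ a' - featMean φ p))) * (φ a' ⬝ᵥ θ)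
      = (φ a - φ b) ⬝ᵥ θ) ∧
    (∑ a' : A, p a' *
        (((φ a - featMean φ p) ⬝ᵥ ((covMat φ p)⁻¹ *ᵥ (φ a' - featMean φ p))) * (φ a' ⬝ᵥ θ)
          - ((φ b - featMean φ p) ⬝ᵥ ((covMat φ p)⁻¹ *ᵥ (φ a' - featMean φ p))) * (φ a' ⬝ᵥ θ))
      = φ a ⬝ᵥ θ - φ b ⬝ᵥ θ) := by
  constructor
  · have h := key' φ p hp1 hV θ ((φ a - featMean φ p) - (φ b - featMean φ p))
    rw [h]
    congr 1
    abel
  · have ha := key' φ p hp1 hV θ (φ a - featMean φ p)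
    have hb := key' φ p hp1 hV θ (φ b - featMean φ p)
    calc ∑ a' : A, p a' *
        (((φ a - featMean φ p) ⬝ᵥ ((covMat φ p)⁻¹ *ᵥ (φ a' - featMean φ p))) * (φ a' ⬝ᵥ θ)
          - ((φ b - featMean φ p) ⬝ᵥ ((covMat φ p)⁻¹ *ᵥ (φ a' - featMean φ p))) * (φ a' ⬝ᵥ θ))
        = (∑ a' : A, p a' * ((φ a - featMean φ p) ⬝ᵥ ((covMat φ p)⁻¹ *ᵥ (φ a' - featMean φ p))) * (φ a' ⬝ᵥ θ))
          - ∑ a' : A, p a' * ((φ b - featMean φ p) ⬝ᵥ ((covMat φ p)⁻¹ *ᵥ (φ a' - featMean φ p))) * (φ a' ⬝ᵥ θ) := by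
          rw [← Finset.sum_sub_distrib]
          exact Finset.sum_congr rfl fun a' _ => by ring
      _ = φ a ⬝ᵥ θ - φ b ⬝ᵥ θ := by rw [ha, hb]; simp [sub_dotProduct]
end

section
/- Let ε ∈ (1,2] and suppose V(p) is invertible. Then ∑_{a∈A} ∑_{b∈A} p_a p_b · |φ̄_a^⊤ V(p)^{-1} φ̄_b|^ε ≤ 4 · d^{ε/2} · (1 − max_{a∈A} p_a)^{2−ε}. -/
open Matrix Finset

/-!
For `q a b = φ̄_aᵀ V⁻¹ φ̄_b` the kernel `q` is symmetric, has `p`-mean zero in each argument, and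
satisfies `∑_b p_b q_ab² = q_aa` and `∑_a p_a q_aa = tr (V⁻¹ V) = d`. Cauchy–Schwarz on `A ∖ {a}`,
where the zero mean gives `∑_{b ≠ a} p_b q_ab = -p_a q_aa`, yields the leverage bound
`p_a q_aa ≤ 1 - p_a`. Split the double sum at a maximiser `t` of `p` into the corner `(t, t)`,
the row and column of `t`, and the block off `t`, and estimate each by the weighted Hölder
inequality `∑ w |x|^ε ≤ (∑ w)^(1-ε/2) (∑ w x²)^(ε/2)`: by the leverage bound the first three are
at most `(1 - p_t)^(2-ε)`, and by the trace identity the last is at most `d^(ε/2) (1 - p_t)^(2-ε)`.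
-/

open Real

theorem le_one_of_sum_eq_one {ι : Type*} [Fintype ι] {p : ι → ℝ} (hp : ∀ a, 0 ≤ p a)
    (hp1 : ∑ a, p a = 1) (a : ι) : p a ≤ 1 :=
  hp1 ▸ single_le_sum (fun b _ => hp b) (mem_univ a)

theorem Finset.sum_mul_abs_rpow_le {ι : Type*} (s : Finset ι) {w : ι → ℝ} (hw : ∀ i, 0 ≤ w i)
    (x : ι → ℝ) {ε : ℝ} (hε0 : 0 < ε) (hε2 : ε ≤ 2) :
    ∑ i ∈ s, w i * |x i| ^ ε
      ≤ (∑ i ∈ s, w i) ^ (1 - ε / 2) * (∑ i ∈ s, w i * x i ^ 2) ^ (ε / 2) := by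
  have hexp : (2 / ε)⁻¹ = ε / 2 := inv_div 2 ε
  have hpow : ∀ i, (|x i| ^ ε) ^ (2 / ε) = x i ^ 2 := fun i => by
    rw [← rpow_mul (abs_nonneg _), mul_div_cancel₀ _ hε0.ne', rpow_two, sq_abs]
  simpa only [hexp, hpow] using inner_le_weight_mul_Lp_of_nonneg s
    ((one_le_div hε0).2 hε2) w (fun i => |x i| ^ ε) hw (fun i => by positivity)

theorem Finset.sum_sum_mul_abs_rpow_le {ι : Type*} (s t : Finset ι) {p : ι → ℝ}
    (hp : ∀ a, 0 ≤ p a) (q : ι → ι → ℝ) {ε : ℝ} (hε0 : 0 < ε) (hε2 : ε ≤ 2) :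
    ∑ a ∈ s, ∑ b ∈ t, p a * p b * |q a b| ^ ε
      ≤ ((∑ a ∈ s, p a) * ∑ b ∈ t, p b) ^ (1 - ε / 2)
        * (∑ a ∈ s, ∑ b ∈ t, p a * p b * q a b ^ 2) ^ (ε / 2) := by
  simpa only [sum_product, sum_mul_sum] using
    (s ×ˢ t).sum_mul_abs_rpow_le (w := fun x => p x.1 * p x.2)
      (fun x => mul_nonneg (hp _) (hp _)) (fun x => q x.1 x.2) hε0 hε2

theorem Finset.sum_erase_sum_erase_mul_abs_rpow_le {ι : Type*} [Fintype ι] [DecidableEq ι]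
    {p : ι → ℝ} (hp : ∀ a, 0 ≤ p a) (hp1 : ∑ a, p a = 1) (q : ι → ι → ℝ) (t : ι) {ε : ℝ}
    (hε0 : 0 < ε) (hε2 : ε ≤ 2) :
    ∑ a ∈ univ.erase t, ∑ b ∈ univ.erase t, p a * p b * |q a b| ^ ε
      ≤ (1 - p t) ^ (2 - ε) * (∑ a, ∑ b, p a * p b * q a b ^ 2) ^ (ε / 2) := by
  set E := univ.erase t
  have hE : ∑ b ∈ E, p b = 1 - p t := by linarith [add_sum_erase univ p (mem_univ t)]
  have hm0 : 0 ≤ 1 - p t := hE ▸ sum_nonneg fun b _ => hp b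
  have hF : ∀ a b, 0 ≤ p a * p b * q a b ^ 2 := fun a b =>
    mul_nonneg (mul_nonneg (hp a) (hp b)) (sq_nonneg _)
  calc ∑ a ∈ E, ∑ b ∈ E, p a * p b * |q a b| ^ ε
      ≤ ((1 - p t) * (1 - p t)) ^ (1 - ε / 2)
          * (∑ a ∈ E, ∑ b ∈ E, p a * p b * q a b ^ 2) ^ (ε / 2) := by
        simpa only [hE] using sum_sum_mul_abs_rpow_le E E hp q hε0 hε2
    _ ≤ ((1 - p t) * (1 - p t)) ^ (1 - ε / 2) * (∑ a, ∑ b, p a * p b * q a b ^ 2) ^ (ε / 2) := by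
        gcongr
        · exact sum_nonneg fun a _ => sum_nonneg fun b _ => hF a b
        · exact (sum_le_sum fun a _ => sum_le_univ_sum_of_nonneg (hF a)).trans
            (sum_le_univ_sum_of_nonneg fun a => sum_nonneg fun b _ => hF a b)
    _ = (1 - p t) ^ (2 - ε) * (∑ a, ∑ b, p a * p b * q a b ^ 2) ^ (ε / 2) := by
        rw [mul_rpow hm0 hm0, ← rpow_add_of_nonneg hm0 (by linarith) (by linarith)]
        ring_nf

structure IsCenteredKernel {ι : Type*} [Fintype ι] (p : ι → ℝ) (q : ι → ι → ℝ) : Prop where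
  symm : ∀ a b, q a b = q b a
  sum_mul_eq_zero : ∀ a, ∑ b, p b * q a b = 0
  sum_mul_sq_eq : ∀ a, ∑ b, p b * q a b ^ 2 = q a a

namespace IsCenteredKernel

variable {ι : Type*} [Fintype ι] {p : ι → ℝ} {q : ι → ι → ℝ}

theorem diag_nonneg (hq : IsCenteredKernel p q) (hp : ∀ a, 0 ≤ p a) (a : ι) : 0 ≤ q a a :=
  hq.sum_mul_sq_eq a ▸ sum_nonneg fun b _ => mul_nonneg (hp b) (sq_nonneg _)

theorem mul_diag_le (hq : IsCenteredKernel p q) (hp : ∀ a, 0 ≤ p a) (hp1 : ∑ a, p a = 1)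
    (a : ι) : p a * q a a ≤ 1 - p a := by
  classical
  set E := univ.erase a
  set s := q a a
  have hsplit : ∀ f : ι → ℝ, ∑ b, f b = f a + ∑ b ∈ E, f b := fun f =>
    (add_sum_erase _ _ (mem_univ a)).symm
  have hE : ∑ b ∈ E, p b = 1 - p a := by rw [← hp1, hsplit]; ring
  have hmean : ∑ b ∈ E, p b * q a b = -(p a * s) := by
    have := hq.sum_mul_eq_zero a; rw [hsplit] at this; linarith
  have hvar : ∑ b ∈ E, p b * q a b ^ 2 = s - p a * s ^ 2 := by
    have := hq.sum_mul_sq_eq a; rw [hsplit] at this; linarith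
  have hcs := sum_sq_le_sum_mul_sum_of_sq_le_mul E (r := fun b => p b * q a b)
    (fun b _ => hp b) (fun b _ => mul_nonneg (hp b) (sq_nonneg (q a b)))
    (fun b _ => le_of_eq (by ring))
  rw [hmean, hE, hvar] at hcs
  have hpa : p a ≤ 1 := le_one_of_sum_eq_one hp hp1 a
  rcases (show 0 ≤ s from hq.diag_nonneg hp a).eq_or_lt with hs0 | hspos
  · rw [← hs0, mul_zero]; linarith
  · nlinarith

theorem sum_sum_mul_sq_eq (hq : IsCenteredKernel p q) :
    ∑ a, ∑ b, p a * p b * q a b ^ 2 = ∑ a, p a * q a a := by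
  simp_rw [mul_assoc, ← mul_sum, hq.sum_mul_sq_eq]

section

variable (hq : IsCenteredKernel p q) (hp : ∀ a, 0 ≤ p a) (hp1 : ∑ a, p a = 1)
  (t : ι) {ε : ℝ} (hε1 : 1 ≤ ε) (hε2 : ε ≤ 2)
include hq hp hp1 hε1 hε2

theorem mul_mul_abs_diag_rpow_le : p t * p t * |q t t| ^ ε ≤ (1 - p t) ^ (2 - ε) := by
  have hpt1 : p t ≤ 1 := le_one_of_sum_eq_one hp hp1 t
  have hdiag := hq.diag_nonneg hp t
  calc p t * p t * |q t t| ^ ε ≤ p t ^ ε * |q t t| ^ ε := by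
        gcongr
        rw [← sq, ← rpow_two]
        exact rpow_le_rpow_of_exponent_ge' (hp t) hpt1 (by linarith) hε2
    _ = (p t * q t t) ^ ε := by rw [abs_of_nonneg hdiag, mul_rpow (hp t) hdiag]
    _ ≤ (1 - p t) ^ ε := by gcongr; exacts [mul_nonneg (hp t) hdiag, hq.mul_diag_le hp hp1 t]
    _ ≤ (1 - p t) ^ (2 - ε) :=
        rpow_le_rpow_of_exponent_ge' (by linarith) (by linarith [hp t]) (by linarith) (by linarith)

variable [DecidableEq ι]

theorem sum_erase_mul_abs_rpow_le :
    ∑ b ∈ univ.erase t, p t * p b * |q t b| ^ ε ≤ (1 - p t) ^ (2 - ε) := by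
  set E := univ.erase t
  have hpt1 : p t ≤ 1 := le_one_of_sum_eq_one hp hp1 t
  have hm0 : 0 ≤ 1 - p t := by linarith
  have hE : ∑ b ∈ E, p b = 1 - p t := by
    linarith [add_sum_erase Finset.univ p (mem_univ t)]
  have hrow0 : 0 ≤ ∑ b ∈ E, p b * q t b ^ 2 :=
    sum_nonneg fun b _ => mul_nonneg (hp b) (sq_nonneg _)
  have hrow : p t * ∑ b ∈ E, p b * q t b ^ 2 ≤ 1 - p t := by
    refine le_trans (mul_le_mul_of_nonneg_left ?_ (hp t)) (hq.mul_diag_le hp hp1 t)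
    rw [← hq.sum_mul_sq_eq t, ← add_sum_erase _ _ (mem_univ t)]
    linarith [mul_nonneg (hp t) (sq_nonneg (q t t))]
  calc ∑ b ∈ E, p t * p b * |q t b| ^ ε
      ≤ (p t * (1 - p t)) ^ (1 - ε / 2) * (p t * ∑ b ∈ E, p b * q t b ^ 2) ^ (ε / 2) := by
        simpa only [sum_singleton, hE, mul_sum, mul_assoc] using
          Finset.sum_sum_mul_abs_rpow_le {t} E hp q (by linarith) hε2
    _ ≤ (1 - p t) ^ (1 - ε / 2) * (1 - p t) ^ (ε / 2) := by
        have hpt0 := hp t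
        gcongr <;> nlinarith
    _ = 1 - p t := by rw [← rpow_add_of_nonneg hm0 (by linarith) (by linarith)]; norm_num
    _ ≤ (1 - p t) ^ (2 - ε) := self_le_rpow_of_le_one hm0 (by linarith [hp t]) (by linarith)

end

theorem sum_sum_mul_abs_rpow_le [Nonempty ι] (hq : IsCenteredKernel p q) (hp : ∀ a, 0 ≤ p a)
    (hp1 : ∑ a, p a = 1) (hD : 1 ≤ ∑ a, p a * q a a) {ε : ℝ} (hε1 : 1 ≤ ε) (hε2 : ε ≤ 2) :
    ∑ a, ∑ b, p a * p b * |q a b| ^ ε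
      ≤ 4 * (∑ a, p a * q a a) ^ (ε / 2) * (1 - univ.sup' univ_nonempty p) ^ (2 - ε) := by
  classical
  obtain ⟨t, -, hpt⟩ := exists_mem_eq_sup' univ_nonempty p
  have hcorner := hq.mul_mul_abs_diag_rpow_le hp hp1 t hε1 hε2
  have hrow := hq.sum_erase_mul_abs_rpow_le hp hp1 t hε1 hε2
  have hcol : ∑ a ∈ univ.erase t, p a * p t * |q a t| ^ ε ≤ (1 - p t) ^ (2 - ε) := by
    simpa only [hq.symm _ t, mul_comm (p _) (p t)] using hrow
  have hrest := sum_erase_sum_erase_mul_abs_rpow_le hp hp1 q t (by linarith) hε2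
  rw [hq.sum_sum_mul_sq_eq] at hrest
  have hD' : 1 ≤ (∑ a, p a * q a a) ^ (ε / 2) := one_le_rpow hD (by linarith)
  have hm : 0 ≤ (1 - p t) ^ (2 - ε) :=
    rpow_nonneg (by linarith [le_one_of_sum_eq_one hp hp1 t]) _
  have hsplit : ∀ f : ι → ℝ, ∑ a, f a = f t + ∑ a ∈ univ.erase t, f a := fun f =>
    (add_sum_erase _ _ (mem_univ t)).symm
  rw [hpt]
  -- so that `simp_rw [hsplit]` below splits only the double sum
  generalize ∑ a, p a * q a a = D at *
  simp_rw [hsplit, sum_add_distrib]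
  nlinarith

end IsCenteredKernel

section Gram

variable {ι n : Type*} [Fintype ι]

theorem Matrix.isSymm_sum_smul_vecMulVec {R : Type*} [CommRing R] (p : ι → R) (u : ι → n → R) :
    (∑ a, p a • vecMulVec (u a) (u a)).IsSymm := by
  simp [IsSymm, transpose_sum, transpose_smul, transpose_vecMulVec]

variable [Fintype n]

theorem Matrix.dotProduct_sum_smul_vecMulVec_mulVec {R : Type*} [CommRing R] (p : ι → R)
    (u : ι → n → R) (x y : n → R) :
    x ⬝ᵥ ((∑ a, p a • vecMulVec (u a) (u a)) *ᵥ y) = ∑ a, p a * ((u a ⬝ᵥ x) * (u a ⬝ᵥ y)) := by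
  rw [dotProduct_comm]
  simp only [sum_mulVec, smul_mulVec, vecMulVec_mulVec, sum_dotProduct, smul_dotProduct,
    op_smul_eq_smul, smul_eq_mul, mul_comm (u _ ⬝ᵥ y)]

variable [DecidableEq n] {p : ι → ℝ} {u : ι → n → ℝ}

theorem isCenteredKernel_dotProduct_inv_mulVec (hu : ∑ a, p a • u a = 0)
    (hV : IsUnit (∑ a, p a • vecMulVec (u a) (u a)).det) :
    IsCenteredKernel p fun a b => u a ⬝ᵥ ((∑ c, p c • vecMulVec (u c) (u c))⁻¹ *ᵥ u b) := by
  set V := ∑ c, p c • vecMulVec (u c) (u c)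
  have hW : V⁻¹ᵀ = V⁻¹ := (isSymm_sum_smul_vecMulVec p u).inv
  have hsymm : ∀ x y, x ⬝ᵥ (V⁻¹ *ᵥ y) = y ⬝ᵥ (V⁻¹ *ᵥ x) := fun x y => by
    rw [dotProduct_mulVec, ← hW, vecMul_transpose, hW, dotProduct_comm]
  refine ⟨fun a b => hsymm _ _, fun a => ?_, fun a => ?_⟩
  · calc ∑ b, p b * (u a ⬝ᵥ (V⁻¹ *ᵥ u b)) = u a ⬝ᵥ (V⁻¹ *ᵥ ∑ b, p b • u b) := by
          simp [mulVec_sum, dotProduct_sum, mulVec_smul]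
      _ = 0 := by rw [hu, mulVec_zero, dotProduct_zero]
  · calc ∑ b, p b * (u a ⬝ᵥ (V⁻¹ *ᵥ u b)) ^ 2
        = (V⁻¹ *ᵥ u a) ⬝ᵥ (V *ᵥ (V⁻¹ *ᵥ u a)) := by
          rw [dotProduct_sum_smul_vecMulVec_mulVec]
          simp_rw [hsymm (u a), sq]
      _ = u a ⬝ᵥ (V⁻¹ *ᵥ u a) := by
          rw [mulVec_mulVec, mul_nonsing_inv V hV, one_mulVec, dotProduct_comm]

theorem sum_mul_dotProduct_inv_mulVec_self (hV : IsUnit (∑ a, p a • vecMulVec (u a) (u a)).det) :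
    ∑ a, p a * (u a ⬝ᵥ ((∑ c, p c • vecMulVec (u c) (u c))⁻¹ *ᵥ u a)) = Fintype.card n := by
  set V := ∑ c, p c • vecMulVec (u c) (u c)
  have : trace (V⁻¹ * V) = ∑ a, p a * (u a ⬝ᵥ (V⁻¹ *ᵥ u a)) := by
    simp [V, Matrix.mul_sum, trace_sum, mul_vecMulVec, dotProduct_comm]
  rw [← this, nonsing_inv_mul V hV, trace_one]

end Gram

theorem sum_smul_sub_featMean {A : Type*} [Fintype A] {d : ℕ} (φ : A → Fin d → ℝ) {p : A → ℝ}
    (hp1 : ∑ a, p a = 1) : ∑ a, p a • (φ a - featMean φ p) = 0 := by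
  rw [featMean]
  simp only [smul_sub, sum_sub_distrib, ← sum_smul, hp1, one_smul, sub_self]

/-- Lemma 10: variance bound for the variance-reduced linear loss estimator.
For `ε ∈ (1,2]` and `V(p)` invertible,
`∑_a ∑_b p_a p_b |φ̄_a^⊤ V(p)⁻¹ φ̄_b|^ε ≤ 4 d^{ε/2} (1 − max_a p_a)^{2−ε}`. -/
theorem vr_estimator_variance_bound
    {A : Type*} [Fintype A] [Nonempty A] {d : ℕ} (hd : 1 ≤ d)
    (φ : A → Fin d → ℝ) (p : A → ℝ)
    (hp : ∀ a, 0 ≤ p a) (hp1 : ∑ a, p a = 1)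
    (hV : IsUnit (covMat φ p).det)
    (ε : ℝ) (hε1 : 1 < ε) (hε2 : ε ≤ 2) :
    ∑ a : A, ∑ b : A, p a * p b *
        |(φ a - featMean φ p) ⬝ᵥ ((covMat φ p)⁻¹ *ᵥ (φ b - featMean φ p))| ^ ε
      ≤ 4 * (d : ℝ) ^ (ε / 2) * (1 - Finset.univ.sup' Finset.univ_nonempty p) ^ (2 - ε) := by
  have hq := isCenteredKernel_dotProduct_inv_mulVec (sum_smul_sub_featMean φ hp1) hV
  have htrace := sum_mul_dotProduct_inv_mulVec_self hV
  rw [Fintype.card_fin] at htrace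
  have hbound := hq.sum_sum_mul_abs_rpow_le hp hp1 (htrace ▸ Nat.one_le_cast.2 hd) hε1.le hε2
  rwa [htrace] at hbound
end

section
/- Suppose V(p) is invertible. Then for every a ∈ A with p_a > 0, one has φ̄_a^⊤ V(p)^{-1} φ̄_a ≤ (1 − p_a)/p_a. -/
open Matrix Finset

lemma dot_sum_aux {A : Type*} [Fintype A] {d : ℕ} (u : Fin d → ℝ) (f : A → Fin d → ℝ) :
    u ⬝ᵥ (∑ b, f b) = ∑ b, u ⬝ᵥ f b := by
  simp only [dotProduct, Finset.sum_apply, Finset.mul_sum]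
  exact Finset.sum_comm

lemma dot_vecMulVec_aux {d : ℕ} (u v : Fin d → ℝ) :
    u ⬝ᵥ (vecMulVec v v *ᵥ u) = (u ⬝ᵥ v)^2 := by
  simp [vecMulVec, mulVec, dotProduct, Finset.mul_sum, Finset.sum_mul, sq]
  rw [Finset.sum_comm]
  congr 1; ext i; congr 1; ext j; ring

lemma quad_form_aux {A : Type*} [Fintype A] {d : ℕ} (φ : A → Fin d → ℝ)
    (p : A → ℝ) (u : Fin d → ℝ) :
    u ⬝ᵥ (covMat φ p *ᵥ u) = ∑ b, p b * (u ⬝ᵥ (φ b - featMean φ p))^2 := by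
  unfold covMat
  have hsum : (∑ b : A, p b • vecMulVec (φ b - featMean φ p) (φ b - featMean φ p)) *ᵥ u
      = ∑ b : A, (p b • vecMulVec (φ b - featMean φ p) (φ b - featMean φ p)) *ᵥ u :=
    map_sum (Matrix.mulVec.addMonoidHomLeft u) _ Finset.univ
  rw [hsum, dot_sum_aux]
  congr 1; ext b
  rw [Matrix.smul_mulVec, dotProduct_smul, dot_vecMulVec_aux]
  simp [mul_comm]

lemma center_aux {A : Type*} [Fintype A] {d : ℕ} (φ : A → Fin d → ℝ)
    (p : A → ℝ) (hp1 : ∑ a, p a = 1) (u : Fin d → ℝ) :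
    ∑ b, p b * (u ⬝ᵥ (φ b - featMean φ p)) = 0 := by
  have h : ∑ b, p b • (φ b - featMean φ p) = 0 := by
    simp only [smul_sub, Finset.sum_sub_distrib, ← Finset.sum_smul, hp1, one_smul]
    simp [featMean]
  calc ∑ b, p b * (u ⬝ᵥ (φ b - featMean φ p))
      = u ⬝ᵥ (∑ b, p b • (φ b - featMean φ p)) := by
        rw [dot_sum_aux]; congr 1; ext b; rw [dotProduct_smul]; simp [mul_comm]
    _ = 0 := by rw [h]; simp


/-- per-arm leverage bound from the proof of Lemma 10.
If `V(p)` is invertible, then for every `a ∈ A` with `p_a > 0`,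
`φ̄_a^⊤ V(p)⁻¹ φ̄_a ≤ (1 − p_a)/p_a`. -/
theorem centered_leverage_bound
    {A : Type*} [Fintype A] [Nonempty A] {d : ℕ} (hd : 1 ≤ d)
    (φ : A → Fin d → ℝ) (p : A → ℝ)
    (hp : ∀ a, 0 ≤ p a) (hp1 : ∑ a, p a = 1)
    (hV : IsUnit (covMat φ p).det)
    (a : A) (hpa : 0 < p a) :
    (φ a - featMean φ p) ⬝ᵥ ((covMat φ p)⁻¹ *ᵥ (φ a - featMean φ p)) ≤ (1 - p a) / p a := by
  classical
  set V := covMat φ p with hVdef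
  set x : Fin d → ℝ := φ a - featMean φ p with hx
  set y : Fin d → ℝ := V⁻¹ *ᵥ x with hy
  set t : ℝ := x ⬝ᵥ y with ht
  have hVy : V *ᵥ y = x := by
    rw [hy, Matrix.mulVec_mulVec, Matrix.mul_nonsing_inv _ hV, Matrix.one_mulVec]
  set s : A → ℝ := fun b => y ⬝ᵥ (φ b - featMean φ p) with hs
  have hsa : s a = t := by rw [hs]; simp only [ht, hx]; rw [dotProduct_comm]
  have hquad : t = ∑ b, p b * s b ^ 2 := by
    have h2 := quad_form_aux φ p y
    rw [hVy] at h2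
    rw [ht, dotProduct_comm]
    exact h2
  have ht0 : 0 ≤ t := by
    rw [hquad]
    exact Finset.sum_nonneg fun b _ => mul_nonneg (hp b) (sq_nonneg _)
  have hcenter : ∑ b, p b * s b = 0 := center_aux φ p hp1 y
  have hpa1 : p a ≤ 1 := hp1 ▸ Finset.single_le_sum (fun b _ => hp b) (mem_univ a)
  have hsea := Finset.sum_erase_add univ (fun b => p b * s b) (mem_univ a)
  have hse : ∑ b ∈ univ.erase a, p b * s b = -(p a * t) := by
    rw [hcenter, hsa] at hsea
    linarith
  have hse2a := Finset.sum_erase_add univ (fun b => p b * s b ^ 2) (mem_univ a)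
  have hse2 : ∑ b ∈ univ.erase a, p b * s b ^ 2 = t - p a * t ^ 2 := by
    rw [← hquad, hsa] at hse2a
    linarith
  have hpea := Finset.sum_erase_add univ p (mem_univ a)
  have hpe : ∑ b ∈ univ.erase a, p b = 1 - p a := by
    rw [hp1] at hpea; linarith
  have hcs : (∑ b ∈ univ.erase a, p b * s b) ^ 2 ≤
      (∑ b ∈ univ.erase a, p b) * (∑ b ∈ univ.erase a, p b * s b ^ 2) := by
    have key := Finset.sum_mul_sq_le_sq_mul_sq (univ.erase a)
      (fun b => Real.sqrt (p b)) (fun b => Real.sqrt (p b) * s b)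
    have e1 : ∀ b, Real.sqrt (p b) * (Real.sqrt (p b) * s b) = p b * s b := by
      intro b; rw [← mul_assoc, Real.mul_self_sqrt (hp b)]
    have e2 : ∀ b, Real.sqrt (p b) ^ 2 = p b := fun b => Real.sq_sqrt (hp b)
    have e3 : ∀ b, (Real.sqrt (p b) * s b) ^ 2 = p b * s b ^ 2 := by
      intro b; rw [mul_pow, e2]
    simp only [e1, e2, e3] at key
    exact key
  rw [hse, hse2, hpe] at hcs
  -- (p a * t)^2 ≤ (1 - p a) * (t - p a * t^2)
  have hkey : p a * t ^ 2 ≤ (1 - p a) * t := by nlinarith [sq_nonneg t]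
  rw [ht, hy, hx, hVdef] at *
  rw [le_div_iff₀ hpa]
  rcases eq_or_lt_of_le ht0 with h0 | h0
  · rw [← h0]; linarith
  · nlinarith
end

section
/- Let ε ∈ (1,2] and suppose S is invertible. Then for every x ∈ ℝ^d, ∑_{b∈A} p_b · |x^⊤ S^{-1} φ_b|^ε ≤ (x^⊤ S^{-1} x)^{ε/2}. -/
open Matrix Finset

/-- Uncentered feature covariance matrix `S = ∑_a p_a φ_a φ_a^⊤`. -/
noncomputable def uncCovMat {A : Type*} [Fintype A] {d : ℕ} (φ : A → Fin d → ℝ)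
    (p : A → ℝ) : Matrix (Fin d) (Fin d) ℝ :=
  ∑ a, p a • Matrix.vecMulVec (φ a) (φ a)

lemma uncCovMat_transpose {A : Type*} [Fintype A] {d : ℕ} (φ : A → Fin d → ℝ)
    (p : A → ℝ) : (uncCovMat φ p)ᵀ = uncCovMat φ p := by
  ext i j
  simp [uncCovMat, Matrix.transpose_apply, Matrix.sum_apply, Matrix.smul_apply,
    Matrix.vecMulVec_apply, mul_comm]

lemma quad_form_eq {A : Type*} [Fintype A] {d : ℕ} (φ : A → Fin d → ℝ)
    (p : A → ℝ) (w : Fin d → ℝ) :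
    ∑ b : A, p b * (w ⬝ᵥ φ b) ^ 2 = w ⬝ᵥ (uncCovMat φ p *ᵥ w) := by
  simp only [uncCovMat, Matrix.mulVec, dotProduct, Matrix.sum_apply, Matrix.smul_apply,
    Matrix.vecMulVec_apply, smul_eq_mul, Finset.sum_mul, Finset.mul_sum]
  have step : (∑ x : Fin d, ∑ y : Fin d, ∑ i : A, w x * (p i * (φ i x * φ i y) * w y))
      = ∑ i : A, ∑ x : Fin d, ∑ y : Fin d, w x * (p i * (φ i x * φ i y) * w y) := by
    have h1 : (∑ x : Fin d, ∑ y : Fin d, ∑ i : A, w x * (p i * (φ i x * φ i y) * w y))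
        = ∑ x : Fin d, ∑ i : A, ∑ y : Fin d, w x * (p i * (φ i x * φ i y) * w y) :=
      Finset.sum_congr rfl fun x _ => Finset.sum_comm
    rw [h1]
    exact Finset.sum_comm
  rw [step]
  refine Finset.sum_congr rfl fun b _ => ?_
  rw [sq, Finset.sum_mul_sum]
  simp only [Finset.mul_sum]
  refine Finset.sum_congr rfl fun i _ => Finset.sum_congr rfl fun j _ => ?_
  ring

/-- Jensen step bounding the bias of the clipped linear loss estimator by the
bonus, from the proof of Theorem 2. For `ε ∈ (1,2]` and invertible
`S = ∑_a p_a φ_a φ_a^⊤`, for every `x ∈ ℝ^d`,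
`∑_b p_b |x^⊤ S⁻¹ φ_b|^ε ≤ (x^⊤ S⁻¹ x)^{ε/2}`. -/
theorem eps_moment_jensen_bound
    {A : Type*} [Fintype A] [Nonempty A] {d : ℕ} (hd : 1 ≤ d)
    (φ : A → Fin d → ℝ) (p : A → ℝ)
    (hp : ∀ a, 0 ≤ p a) (hp1 : ∑ a, p a = 1)
    (hS : IsUnit (uncCovMat φ p).det)
    (ε : ℝ) (hε1 : 1 < ε) (hε2 : ε ≤ 2)
    (x : Fin d → ℝ) :
    ∑ b : A, p b * |x ⬝ᵥ ((uncCovMat φ p)⁻¹ *ᵥ φ b)| ^ ε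
      ≤ (x ⬝ᵥ ((uncCovMat φ p)⁻¹ *ᵥ x)) ^ (ε / 2) := by
  set S := uncCovMat φ p with hSdef
  have hεpos : (0:ℝ) < ε := by linarith
  have hSinvT : S⁻¹ᵀ = S⁻¹ := by
    rw [Matrix.transpose_nonsing_inv, uncCovMat_transpose]
  set w : Fin d → ℝ := S⁻¹ *ᵥ x with hw
  have hrw : ∀ v : Fin d → ℝ, x ⬝ᵥ (S⁻¹ *ᵥ v) = w ⬝ᵥ v := by
    intro v
    rw [Matrix.dotProduct_mulVec, hw, ← Matrix.mulVec_transpose, hSinvT]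
  have hkey : ∑ b : A, p b * (w ⬝ᵥ φ b) ^ 2 = x ⬝ᵥ (S⁻¹ *ᵥ x) := by
    rw [quad_form_eq φ p w, hw, Matrix.mulVec_mulVec,
      Matrix.mul_nonsing_inv _ hS, Matrix.one_mulVec, hrw x]
  calc ∑ b : A, p b * |x ⬝ᵥ (S⁻¹ *ᵥ φ b)| ^ ε
      ≤ (∑ b : A, p b * (|x ⬝ᵥ (S⁻¹ *ᵥ φ b)| ^ ε) ^ (2/ε)) ^ (1/(2/ε)) := by
        apply Real.arith_mean_le_rpow_mean _ _ _ (fun i _ => hp i)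
          (by simpa using hp1) (fun i _ => by positivity)
        rw [le_div_iff₀ hεpos]; linarith
    _ = (x ⬝ᵥ (S⁻¹ *ᵥ x)) ^ (ε / 2) := by
        have h1 : ∀ b : A, (|x ⬝ᵥ (S⁻¹ *ᵥ φ b)| ^ ε) ^ (2/ε)
            = (w ⬝ᵥ φ b) ^ 2 := by
          intro b
          rw [← Real.rpow_mul (abs_nonneg _)]
          have hle : ε * (2 / ε) = 2 := by field_simp
          rw [hle, hrw (φ b), show ((2:ℝ) = ((2:ℕ):ℝ)) by norm_num,
            Real.rpow_natCast, sq_abs]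
        simp only [h1, hkey]
        rw [one_div_div]
end

section
/- Suppose p* is a probability distribution on A maximizing p ↦ det V(p) over all probability distributions on A, and suppose V(p*) is positive definite. Then for all x, y in the convex hull of {φ_a : a ∈ A}, (x − y)^⊤ V(p*)^{-1} (x − y) ≤ 4d; equivalently ‖x − y‖_{V(p*)^{-1}} ≤ 2√d. -/
open Matrix Finset

/-!
Moving mass `t` from `p*` to a single action `a` turns `V(p*)` into
`(1 - t) (V(p*) + t u uᵀ)` with `u = φ_a - μ(p*)`, whose determinant is
`(1 - t)^d det V(p*) (1 + t ‖u‖²_{V(p*)⁻¹})` by the matrix determinant lemma. Maximality of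
`p*` forces this to be at most `det V(p*)` for small `t > 0`, which (Bernoulli) gives
`‖φ_a - μ(p*)‖²_{V(p*)⁻¹} ≤ d`: every feature lies in the ellipsoid of radius `√d` around
`μ(p*)`. The ellipsoid is convex, so it contains the convex hull, and two of its points are at
distance at most `2√d`.
-/

namespace Matrix

variable {n : Type*} [Fintype n]

theorem det_add_vecMulVec {R : Type*} [CommRing R] [DecidableEq n] {M : Matrix n n R}
    (hM : IsUnit M.det) (u v : n → R) :
    (M + vecMulVec u v).det = M.det * (1 + v ⬝ᵥ M⁻¹ *ᵥ u) := by
  rw [vecMulVec_eq Unit, det_add_replicateCol_mul_replicateRow hM,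
    det_unique (1 + replicateRow Unit v * M⁻¹ * replicateCol Unit u), Matrix.mul_assoc, ← replicateCol_mulVec, add_apply, one_apply_eq,
    replicateRow_mul_replicateCol_apply]

theorem PosSemidef.convexOn_dotProduct_mulVec_sub {W : Matrix n n ℝ} (hW : W.PosSemidef)
    (m : n → ℝ) : ConvexOn ℝ Set.univ (fun z => (z - m) ⬝ᵥ W *ᵥ (z - m)) := by
  refine ⟨convex_univ, fun x _ y _ a b ha hb hab => ?_⟩
  have hQ : 0 ≤ (x - y) ⬝ᵥ W *ᵥ (x - y) := by
    simpa using hW.dotProduct_mulVec_nonneg (x - y)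
  obtain rfl : b = 1 - a := by linarith
  -- `a Q(x - m) + b Q(y - m) - Q(a x + b y - m) = a b Q(x - y)` when `a + b = 1`.
  simp only [smul_eq_mul, sub_smul, one_smul, mulVec_add, mulVec_sub, mulVec_smul,
    dotProduct_add, dotProduct_sub, add_dotProduct, sub_dotProduct, dotProduct_smul,
    smul_dotProduct] at hQ ⊢
  nlinarith [mul_nonneg (mul_nonneg ha hb) hQ]

theorem PosSemidef.dotProduct_mulVec_sub_le {W : Matrix n n ℝ} (hW : W.PosSemidef)
    (u v : n → ℝ) :
    (u - v) ⬝ᵥ W *ᵥ (u - v) ≤ 2 * (u ⬝ᵥ W *ᵥ u) + 2 * (v ⬝ᵥ W *ᵥ v) := by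
  have hQ : 0 ≤ (u + v) ⬝ᵥ W *ᵥ (u + v) := by
    simpa using hW.dotProduct_mulVec_nonneg (u + v)
  simp only [mulVec_add, mulVec_sub, dotProduct_add, dotProduct_sub, add_dotProduct,
    sub_dotProduct] at hQ ⊢
  linarith

end Matrix

theorem le_of_forall_one_sub_pow_mul_one_add_mul_le_one {g : ℝ} (n : ℕ)
    (h : ∀ t : ℝ, 0 < t → t ≤ 1 / 2 → (1 - t) ^ n * (1 + t * g) ≤ 1) : g ≤ n := by
  by_contra! hgn
  have hg : 0 < g := (Nat.cast_nonneg n).trans_lt hgn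
  set t := (g - n) / (2 * (n + 1) * g) with ht_def
  have ht : 0 < t := div_pos (by linarith) (by positivity)
  have ht2 : t ≤ 1 / 2 := by
    rw [ht_def, div_le_iff₀ (by positivity)]
    nlinarith
  have hbern : 1 - n * t ≤ (1 - t) ^ n := by
    simpa [← sub_eq_add_neg] using one_add_mul_le_pow (by linarith : (-2 : ℝ) ≤ -t) n
  have hprod : (1 - n * t) * (1 + t * g) ≤ 1 :=
    (mul_le_mul_of_nonneg_right hbern (by positivity)).trans (h t ht ht2)
  -- `t` is chosen so that `n t g` is only a fraction of the first-order gain `g - n`.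
  have hntg : n * t * g = n / (n + 1) * ((g - n) / 2) := by
    rw [ht_def]
    field_simp
  have hfrac : n / (n + 1) * ((g - n) / 2) < g - n := by
    have : (n : ℝ) / (n + 1) < 1 := by rw [div_lt_one (by positivity)]; linarith
    nlinarith
  nlinarith

section MoveMass

variable {A : Type*} [DecidableEq A]

def moveMass (p : A → ℝ) (a : A) (t : ℝ) : A → ℝ :=
  (1 - t) • p + t • Pi.single a 1

theorem moveMass_nonneg {p : A → ℝ} (hp : ∀ b, 0 ≤ p b) (a : A) {t : ℝ} (ht0 : 0 ≤ t)
    (ht1 : t ≤ 1) (b : A) : 0 ≤ moveMass p a t b := by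
  simp only [moveMass, Pi.add_apply, Pi.smul_apply, smul_eq_mul, Pi.single_apply]
  split_ifs <;> nlinarith [hp b]

variable [Fintype A]

theorem sum_moveMass_mul (p : A → ℝ) (a : A) (t : ℝ) (f : A → ℝ) :
    ∑ b, moveMass p a t b * f b = (1 - t) * ∑ b, p b * f b + t * f a := by
  simp [moveMass, add_mul, Finset.sum_add_distrib, Finset.mul_sum, mul_assoc, Pi.single_apply]

theorem sum_moveMass {p : A → ℝ} (hp : ∑ a, p a = 1) (a : A) (t : ℝ) :
    ∑ b, moveMass p a t b = 1 := by
  simpa [hp] using sum_moveMass_mul p a t fun _ => 1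

end MoveMass

section Design

variable {A : Type*} [Fintype A] {d : ℕ} (φ : A → Fin d → ℝ)

theorem featMean_apply (p : A → ℝ) (i : Fin d) : featMean φ p i = ∑ a, p a * φ a i := by
  simp [featMean, Finset.sum_apply]

theorem covMat_apply_of_sum_eq_one {p : A → ℝ} (hp : ∑ a, p a = 1) (i j : Fin d) :
    covMat φ p i j = ∑ a, p a * (φ a i * φ a j) - featMean φ p i * featMean φ p j := by
  simp only [covMat, Matrix.sum_apply, Matrix.smul_apply, vecMulVec_apply, Pi.sub_apply,
    smul_eq_mul]
  calc ∑ a, p a * ((φ a i - featMean φ p i) * (φ a j - featMean φ p j))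
      = ∑ a, (p a * (φ a i * φ a j) - (p a * φ a i) * featMean φ p j
          - featMean φ p i * (p a * φ a j) + (featMean φ p i * featMean φ p j) * p a) := by
        refine Finset.sum_congr rfl fun a _ => ?_
        ring
    _ = _ := by
        rw [Finset.sum_add_distrib, Finset.sum_sub_distrib, Finset.sum_sub_distrib,
          ← Finset.sum_mul, ← Finset.mul_sum, ← Finset.mul_sum, hp, ← featMean_apply,
          ← featMean_apply]
        ring

variable [DecidableEq A]

theorem covMat_moveMass {p : A → ℝ} (hp : ∑ a, p a = 1) (a : A) (t : ℝ) :
    covMat φ (moveMass p a t)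
      = (1 - t) • (covMat φ p + t • vecMulVec (φ a - featMean φ p) (φ a - featMean φ p)) := by
  have hmean : ∀ i, featMean φ (moveMass p a t) i
      = (1 - t) * featMean φ p i + t * φ a i := fun i => by
    simp only [featMean_apply, sum_moveMass_mul]
  ext i j
  rw [covMat_apply_of_sum_eq_one φ (sum_moveMass hp a t), sum_moveMass_mul, hmean, hmean]
  simp only [Matrix.smul_apply, Matrix.add_apply, vecMulVec_apply, Pi.sub_apply, smul_eq_mul,
    covMat_apply_of_sum_eq_one φ hp]
  ring

theorem det_covMat_moveMass {p : A → ℝ} (hp : ∑ a, p a = 1) (hV : IsUnit (covMat φ p).det)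
    (a : A) (t : ℝ) :
    (covMat φ (moveMass p a t)).det
      = (1 - t) ^ d * ((covMat φ p).det * (1 + t * ((φ a - featMean φ p) ⬝ᵥ
          (covMat φ p)⁻¹ *ᵥ (φ a - featMean φ p)))) := by
  rw [covMat_moveMass φ hp, det_smul, Fintype.card_fin, ← vecMulVec_smul,
    det_add_vecMulVec hV, smul_dotProduct, smul_eq_mul]

theorem dotProduct_inv_covMat_mulVec_le_of_isMax {p : A → ℝ} (hp0 : ∀ a, 0 ≤ p a)
    (hp1 : ∑ a, p a = 1)
    (hmax : ∀ q : A → ℝ, (∀ a, 0 ≤ q a) → ∑ a, q a = 1 → (covMat φ q).det ≤ (covMat φ p).det)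
    (hV : (covMat φ p).PosDef) (a : A) :
    (φ a - featMean φ p) ⬝ᵥ (covMat φ p)⁻¹ *ᵥ (φ a - featMean φ p) ≤ d := by
  refine le_of_forall_one_sub_pow_mul_one_add_mul_le_one d fun t ht ht2 => ?_
  have hdet := hmax _ (moveMass_nonneg hp0 a ht.le (by linarith)) (sum_moveMass hp1 a t)
  rw [det_covMat_moveMass φ hp1 hV.det_pos.ne'.isUnit, mul_left_comm] at hdet
  exact (mul_le_iff_le_one_right hV.det_pos).mp hdet

end Design

theorem optimal_design_quadratic_form_bound_general
    {A : Type*} [Fintype A] {d : ℕ}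
    (φ : A → Fin d → ℝ) (pstar : A → ℝ)
    (hps : ∀ a, 0 ≤ pstar a) (hps1 : ∑ a, pstar a = 1)
    (hmax : ∀ p : A → ℝ, (∀ a, 0 ≤ p a) → ∑ a, p a = 1 →
      (covMat φ p).det ≤ (covMat φ pstar).det)
    (hV : (covMat φ pstar).PosDef) :
    ∀ x ∈ convexHull ℝ (Set.range φ), ∀ y ∈ convexHull ℝ (Set.range φ),
      ((x - y) ⬝ᵥ ((covMat φ pstar)⁻¹ *ᵥ (x - y)) ≤ 4 * (d : ℝ)) ∧
      Real.sqrt ((x - y) ⬝ᵥ ((covMat φ pstar)⁻¹ *ᵥ (x - y))) ≤ 2 * Real.sqrt d := by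
  classical
  set m := featMean φ pstar
  set W := (covMat φ pstar)⁻¹
  have hW : W.PosSemidef := hV.inv.posSemidef
  have hhull : convexHull ℝ (Set.range φ) ⊆ {z | z ∈ Set.univ ∧ (z - m) ⬝ᵥ W *ᵥ (z - m) ≤ d} :=
    convexHull_min (Set.range_subset_iff.2 fun a =>
        ⟨trivial, dotProduct_inv_covMat_mulVec_le_of_isMax φ hps hps1 hmax hV a⟩)
      ((hW.convexOn_dotProduct_mulVec_sub m).convex_le d)
  intro x hx y hy
  have hbound : (x - y) ⬝ᵥ W *ᵥ (x - y) ≤ 4 * d := by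
    rw [← sub_sub_sub_cancel_right x y m]
    linarith [hW.dotProduct_mulVec_sub_le (x - m) (y - m), (hhull hx).2, (hhull hy).2]
  refine ⟨hbound, (Real.sqrt_le_sqrt hbound).trans_eq ?_⟩
  rw [Real.sqrt_mul zero_le_four, show (4 : ℝ) = 2 ^ 2 by norm_num, Real.sqrt_sq zero_le_two]

/-- Lemma 8: bounded quadratic form induced by the optimal design
distribution. If `p*` maximizes `p ↦ det V(p)` over probability distributions on `A` and
`V(p*)` is positive definite, then for all `x, y` in the convex hull of `{φ_a : a ∈ A}`,
`(x − y)^⊤ V(p*)⁻¹ (x − y) ≤ 4d`, equivalently `‖x − y‖_{V(p*)⁻¹} ≤ 2√d`. -/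
theorem optimal_design_quadratic_form_bound
    {A : Type*} [Fintype A] [Nonempty A] {d : ℕ} (hd : 1 ≤ d)
    (φ : A → Fin d → ℝ) (pstar : A → ℝ)
    (hps : ∀ a, 0 ≤ pstar a) (hps1 : ∑ a, pstar a = 1)
    (hmax : ∀ p : A → ℝ, (∀ a, 0 ≤ p a) → ∑ a, p a = 1 →
      (covMat φ p).det ≤ (covMat φ pstar).det)
    (hV : (covMat φ pstar).PosDef) :
    ∀ x ∈ convexHull ℝ (Set.range φ), ∀ y ∈ convexHull ℝ (Set.range φ),
      ((x - y) ⬝ᵥ ((covMat φ pstar)⁻¹ *ᵥ (x - y)) ≤ 4 * (d : ℝ)) ∧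
      Real.sqrt ((x - y) ⬝ᵥ ((covMat φ pstar)⁻¹ *ᵥ (x - y))) ≤ 2 * Real.sqrt d :=
  optimal_design_quadratic_form_bound_general φ pstar hps hps1 hmax hV
end

section
/- Suppose p* is a probability distribution on A maximizing p ↦ det V(p) over all probability distributions on A, and suppose V(p*) is positive definite. Then for every a ∈ A, (φ_a − μ(p*))^⊤ V(p*)^{-1} (φ_a − μ(p*)) ≤ d. -/
open Matrix Finset

/-! Moving mass `t` from `p*` onto a point `a` changes the covariance into
`(1 - t) (V + t v vᵀ)` with `v = φ_a − μ(p*)` (law of total variance), whose determinant is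
`(1 - t)^d det V (1 + t L)` by the matrix determinant lemma, `L` being the leverage of `a`.
If `L > d`, Bernoulli's inequality makes this factor exceed `1` for a suitable `t ∈ (0, 1)`,
contradicting the maximality of `det V`. -/

theorem Matrix.det_add_vecMulVec_s9 {n : Type*} [Fintype n] [DecidableEq n] {R : Type*}
    [CommRing R] {V : Matrix n n R} (hV : IsUnit V.det) (u w : n → R) :
    (V + vecMulVec u w).det = V.det * (1 + w ⬝ᵥ (V⁻¹ *ᵥ u)) := by
  rw [vecMulVec_eq Unit, det_add_replicateCol_mul_replicateRow hV, Matrix.mul_assoc,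
    ← replicateCol_mulVec, det_unique (1 + _ : Matrix Unit Unit R)]
  rfl

theorem exists_one_lt_one_sub_pow_mul_one_add_mul {d : ℕ} {L : ℝ} (h : (d : ℝ) < L) :
    ∃ t ∈ Set.Ioo (0 : ℝ) 1, 1 < (1 - t) ^ d * (1 + t * L) := by
  have hL : 0 < L := (Nat.cast_nonneg d).trans_lt h
  -- chosen so that `d t L ≤ (L - d) / 2`, whence `(1 - d t) (1 + t L) ≥ 1 + t (L - d) / 2`
  set t := (L - d) / (2 * (d + 1) * L) with ht
  have ht0 : 0 < t := div_pos (by linarith) (by positivity)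
  have ht1 : t < 1 := by
    rw [ht, div_lt_one (by positivity)]
    nlinarith
  refine ⟨t, ⟨ht0, ht1⟩, ?_⟩
  have hdtL : d * t * L ≤ (L - d) / 2 := by
    have : d * t * L = d / (d + 1) * ((L - d) / 2) := by
      rw [ht]
      field_simp
    rw [this]
    exact mul_le_of_le_one_left (by linarith) ((div_le_one (by positivity)).2 (by linarith))
  have bernoulli : 1 - d * t ≤ (1 - t) ^ d := by
    simpa [sub_eq_add_neg] using one_add_mul_le_pow (a := -t) (by linarith) d
  calc 1 < (1 - d * t) * (1 + t * L) := by nlinarith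
    _ ≤ (1 - t) ^ d * (1 + t * L) := by gcongr

section Covariance

variable {A : Type*} [Fintype A] {d : ℕ} (φ : A → Fin d → ℝ)

theorem featMean_add (p q : A → ℝ) : featMean φ (p + q) = featMean φ p + featMean φ q := by
  simp only [featMean, Pi.add_apply, add_smul, sum_add_distrib]

theorem featMean_smul (c : ℝ) (p : A → ℝ) : featMean φ (c • p) = c • featMean φ p := by
  simp only [featMean, Pi.smul_apply, smul_eq_mul, mul_smul, smul_sum]

theorem featMean_single [DecidableEq A] (a : A) : featMean φ (Pi.single a 1) = φ a := by
  simp [featMean, Pi.single_apply]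

theorem covMat_single [DecidableEq A] (a : A) : covMat φ (Pi.single a 1) = 0 := by
  simp [covMat, featMean_single, Pi.single_apply]

theorem covMat_eq_sum_sub_vecMulVec {p : A → ℝ} (hp : ∑ a, p a = 1) :
    covMat φ p = ∑ a, p a • vecMulVec (φ a) (φ a) - vecMulVec (featMean φ p) (featMean φ p) := by
  ext i j
  have hμ (k : Fin d) : ∑ a, p a * φ a k = featMean φ p k := by
    simp [featMean, Finset.sum_apply]
  simp only [covMat, Matrix.sub_apply, Matrix.sum_apply, Matrix.smul_apply, vecMulVec_apply,
    Pi.sub_apply, smul_eq_mul]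
  calc ∑ a, p a * ((φ a i - featMean φ p i) * (φ a j - featMean φ p j))
      = ∑ a, p a * (φ a i * φ a j) - (∑ a, p a * φ a i) * featMean φ p j
          - featMean φ p i * ∑ a, p a * φ a j + (∑ a, p a) * (featMean φ p i * featMean φ p j) := by
        simp only [sum_mul, mul_sum, ← sum_sub_distrib, ← sum_add_distrib]
        exact sum_congr rfl fun a _ => by ring
    _ = _ := by rw [hμ, hμ, hp]; ring

theorem sum_mix_eq_one {p q : A → ℝ} (hp : ∑ a, p a = 1) (hq : ∑ a, q a = 1) (t : ℝ) :
    ∑ a, ((1 - t) • p + t • q) a = 1 := by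
  simp only [Pi.add_apply, Pi.smul_apply, smul_eq_mul, sum_add_distrib, ← mul_sum, hp, hq]
  ring

theorem covMat_mix {p q : A → ℝ} (hp : ∑ a, p a = 1) (hq : ∑ a, q a = 1) (t : ℝ) :
    covMat φ ((1 - t) • p + t • q) = (1 - t) • covMat φ p + t • covMat φ q +
      (t * (1 - t)) • vecMulVec (featMean φ q - featMean φ p) (featMean φ q - featMean φ p) := by
  rw [covMat_eq_sum_sub_vecMulVec φ (sum_mix_eq_one hp hq t), covMat_eq_sum_sub_vecMulVec φ hp,
    covMat_eq_sum_sub_vecMulVec φ hq, featMean_add, featMean_smul, featMean_smul]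
  ext i j
  simp only [Matrix.add_apply, Matrix.sub_apply, Matrix.smul_apply, Matrix.sum_apply,
    vecMulVec_apply, Pi.add_apply, Pi.sub_apply, Pi.smul_apply, smul_eq_mul, add_mul,
    sum_add_distrib, ← mul_sum, mul_assoc]
  ring

theorem det_covMat_mix_single [DecidableEq A] {p : A → ℝ} (hp : ∑ a, p a = 1)
    (hV : IsUnit (covMat φ p).det) (a : A) (t : ℝ) :
    (covMat φ ((1 - t) • p + t • Pi.single a 1)).det = (covMat φ p).det * ((1 - t) ^ d *
      (1 + t * ((φ a - featMean φ p) ⬝ᵥ ((covMat φ p)⁻¹ *ᵥ (φ a - featMean φ p))))) := by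
  have hsingle : ∑ b, Pi.single a (1 : ℝ) b = 1 := by simp
  set v := φ a - featMean φ p
  have hrank_one : (1 - t) • covMat φ p + (t * (1 - t)) • vecMulVec v v =
      (1 - t) • (covMat φ p + vecMulVec v (t • v)) := by
    rw [smul_add, vecMulVec_smul, smul_smul, mul_comm]
  rw [covMat_mix φ hp hsingle, covMat_single, featMean_single, smul_zero, add_zero, hrank_one,
    det_smul, Fintype.card_fin, det_add_vecMulVec_s9 hV, smul_dotProduct, smul_eq_mul]
  ring

end Covariance

theorem optimal_design_leverage_bound_general
    {A : Type*} [Fintype A] {d : ℕ}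
    (φ : A → Fin d → ℝ) (pstar : A → ℝ)
    (hps : ∀ a, 0 ≤ pstar a) (hps1 : ∑ a, pstar a = 1)
    (hmax : ∀ p : A → ℝ, (∀ a, 0 ≤ p a) → ∑ a, p a = 1 →
      (covMat φ p).det ≤ (covMat φ pstar).det)
    (hV : (covMat φ pstar).PosDef) :
    ∀ a : A, (φ a - featMean φ pstar) ⬝ᵥ ((covMat φ pstar)⁻¹ *ᵥ (φ a - featMean φ pstar))
      ≤ (d : ℝ) := by
  classical
  intro a
  by_contra! hlev
  obtain ⟨t, ⟨ht0, ht1⟩, hgain⟩ := exists_one_lt_one_sub_pow_mul_one_add_mul hlev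
  have hsingle : (0 : A → ℝ) ≤ Pi.single a 1 := Pi.single_nonneg.2 zero_le_one
  have hdet := hmax ((1 - t) • pstar + t • Pi.single a 1)
    (fun b => add_nonneg (mul_nonneg (sub_nonneg.2 ht1.le) (hps b)) (mul_nonneg ht0.le (hsingle b)))
    (sum_mix_eq_one hps1 (by simp) t)
  rw [det_covMat_mix_single φ hps1 hV.det_pos.ne'.isUnit] at hdet
  exact hdet.not_gt (lt_mul_of_one_lt_right hV.det_pos hgain)

/-- Kiefer–Wolfowitz-type leverage bound from the proof of Lemma 8.
If `p*` maximizes `p ↦ det V(p)` over probability distributions on `A` and `V(p*)` is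
positive definite, then for every `a ∈ A`,
`(φ_a − μ(p*))^⊤ V(p*)⁻¹ (φ_a − μ(p*)) ≤ d`. -/
theorem optimal_design_leverage_bound
    {A : Type*} [Fintype A] [Nonempty A] {d : ℕ} (hd : 1 ≤ d)
    (φ : A → Fin d → ℝ) (pstar : A → ℝ)
    (hps : ∀ a, 0 ≤ pstar a) (hps1 : ∑ a, pstar a = 1)
    (hmax : ∀ p : A → ℝ, (∀ a, 0 ≤ p a) → ∑ a, p a = 1 →
      (covMat φ p).det ≤ (covMat φ pstar).det)
    (hV : (covMat φ pstar).PosDef) :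
    ∀ a : A, (φ a - featMean φ pstar) ⬝ᵥ ((covMat φ pstar)⁻¹ *ᵥ (φ a - featMean φ pstar))
      ≤ (d : ℝ) :=
  optimal_design_leverage_bound_general φ pstar hps hps1 hmax hV
end

section
/- Let ε ∈ (1,2] and T ≥ 1. Let z_t > 0, w_t > 0, ĥ_t > 0 and 0 ≤ h_t ≤ ĥ_t for t = 1,…,T. Set β_0 = 0 and suppose β_1,…,β_T are positive reals satisfying the implicit recurrence β_t = β_{t−1} + (z_t β_t^{1−ε} + w_t β_t^{−2})/ĥ_t for every t = 1,…,T. Then ∑_{t=1}^T ((β_t − β_{t−1}) h_t + z_t β_t^{1−ε} + w_t β_t^{−2}) ≤ 2 · [ ∑_{t=1}^T z_t (∑_{s=1}^t z_s/ĥ_s)^{(1−ε)/ε} + ∑_{t=1}^T w_t (∑_{s=1}^t w_s/ĥ_s)^{−2/3} ]. -/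
open Finset

/-- Key convexity-type inequality: for `0 ≤ b ≤ a` and `p ≥ 1`,
`a^(p-1) * (a - b) ≤ a^p - b^p`. -/
lemma aux_rpow_sub_ge (p : ℝ) (hp : 1 ≤ p) {a b : ℝ} (hb : 0 ≤ b) (hab : b ≤ a) :
    a ^ (p - 1) * (a - b) ≤ a ^ p - b ^ p := by
  have ha : 0 ≤ a := hb.trans hab
  have hpne : p - 1 + 1 ≠ 0 := by intro hcon; simp at hcon; linarith
  have haa : a ^ p = a ^ (p - 1) * a := by
    have := Real.rpow_add' ha hpne
    simpa using this
  have hbb : b ^ p = b ^ (p - 1) * b := by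
    have := Real.rpow_add' hb hpne
    simpa using this
  have hmono : b ^ (p - 1) ≤ a ^ (p - 1) :=
    Real.rpow_le_rpow hb hab (by linarith)
  have : b ^ (p - 1) * b ≤ a ^ (p - 1) * b := mul_le_mul_of_nonneg_right hmono hb
  nlinarith [this]

/-- first part of Lemma 5: the implicit heavy-tailed
stability-penalty-matching learning rate. With `β₀ = 0` and
`β_t = β_{t−1} + (z_t β_t^{1−ε} + w_t β_t^{−2})/ĥ_t` for `t = 1,…,T`,
`F(β; z, w, h) ≤ 2 G(z, w, ĥ)`. -/
theorem implicit_htspm_bound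
    (ε : ℝ) (hε1 : 1 < ε) (hε2 : ε ≤ 2)
    (T : ℕ) (hT : 1 ≤ T)
    (z w hh h β : ℕ → ℝ)
    (hz : ∀ t ∈ Finset.Icc 1 T, 0 < z t)
    (hw : ∀ t ∈ Finset.Icc 1 T, 0 < w t)
    (hhh : ∀ t ∈ Finset.Icc 1 T, 0 < hh t)
    (hh0 : ∀ t ∈ Finset.Icc 1 T, 0 ≤ h t)
    (hhle : ∀ t ∈ Finset.Icc 1 T, h t ≤ hh t)
    (hβ0 : β 0 = 0)
    (hβpos : ∀ t ∈ Finset.Icc 1 T, 0 < β t)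
    (hβrec : ∀ t ∈ Finset.Icc 1 T,
      β t = β (t - 1) + (z t * β t ^ (1 - ε) + w t * β t ^ (-2 : ℝ)) / hh t) :
    ∑ t ∈ Finset.Icc 1 T,
        ((β t - β (t - 1)) * h t + z t * β t ^ (1 - ε) + w t * β t ^ (-2 : ℝ))
      ≤ 2 * ((∑ t ∈ Finset.Icc 1 T,
            z t * (∑ s ∈ Finset.Icc 1 t, z s / hh s) ^ ((1 - ε) / ε))
          + ∑ t ∈ Finset.Icc 1 T,
            w t * (∑ s ∈ Finset.Icc 1 t, w s / hh s) ^ (-(2 : ℝ) / 3)) := by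
  have hεpos : (0:ℝ) < ε := by linarith
  -- nonnegativity of β (t-1) for t ∈ Icc 1 T
  have hβprev : ∀ t ∈ Finset.Icc 1 T, 0 ≤ β (t - 1) := by
    intro t ht
    simp only [Finset.mem_Icc] at ht
    rcases Nat.eq_or_lt_of_le ht.1 with h1 | h1
    · rw [← h1]; simp [hβ0]
    · exact (hβpos (t-1) (Finset.mem_Icc.mpr ⟨by omega, by omega⟩)).le
  -- basic positivity of the per-step quantities
  have hterm : ∀ t ∈ Finset.Icc 1 T,
      0 < z t * β t ^ (1 - ε) ∧ 0 < w t * β t ^ (-2 : ℝ) := by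
    intro t ht
    exact ⟨mul_pos (hz t ht) (Real.rpow_pos_of_pos (hβpos t ht) _),
      mul_pos (hw t ht) (Real.rpow_pos_of_pos (hβpos t ht) _)⟩
  -- monotonicity
  have hmono : ∀ t ∈ Finset.Icc 1 T, β (t - 1) ≤ β t := by
    intro t ht
    have := hβrec t ht
    have h1 := (hterm t ht).1
    have h2 := (hterm t ht).2
    have h3 := hhh t ht
    nlinarith [div_pos (by linarith : 0 < z t * β t ^ (1 - ε) + w t * β t ^ (-2:ℝ)) h3]
  -- per-step inequalities for the two potentials
  have hstep : ∀ t ∈ Finset.Icc 1 T,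
      z t / hh t ≤ β t ^ ε - β (t-1) ^ ε ∧
      w t / hh t ≤ β t ^ (3:ℝ) - β (t-1) ^ (3:ℝ) := by
    intro t ht
    have hβt := hβpos t ht
    have hβp := hβprev t ht
    have hle := hmono t ht
    have hhpos := hhh t ht
    have hrec := hβrec t ht
    have hdiff : β t - β (t - 1) = (z t * β t ^ (1 - ε) + w t * β t ^ (-2:ℝ)) / hh t := by
      linarith
    constructor
    · have key := aux_rpow_sub_ge ε hε1.le hβp hle
      have h1 : z t * β t ^ (1 - ε) / hh t ≤ β t - β (t - 1) := by
        rw [hdiff]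
        gcongr
        linarith [(hterm t ht).2]
      have hmul : β t ^ (ε - 1) * (z t * β t ^ (1 - ε) / hh t) = z t / hh t := by
        have hid : β t ^ (ε - 1) * β t ^ (1 - ε) = 1 := by
          rw [← Real.rpow_add hβt]
          norm_num
        field_simp
        linear_combination z t * hid
      have h2 : β t ^ (ε - 1) * (z t * β t ^ (1 - ε) / hh t)
          ≤ β t ^ (ε - 1) * (β t - β (t - 1)) :=
        mul_le_mul_of_nonneg_left h1 (Real.rpow_pos_of_pos hβt _).le
      rw [hmul] at h2
      exact h2.trans key
    · have key := aux_rpow_sub_ge 3 (by norm_num) hβp hle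
      have h1 : w t * β t ^ (-2:ℝ) / hh t ≤ β t - β (t - 1) := by
        rw [hdiff]
        gcongr
        linarith [(hterm t ht).1]
      have hmul : β t ^ ((3:ℝ) - 1) * (w t * β t ^ (-2:ℝ) / hh t) = w t / hh t := by
        have hid : β t ^ ((3:ℝ) - 1) * β t ^ (-2:ℝ) = 1 := by
          rw [← Real.rpow_add hβt]
          norm_num
        field_simp
        linear_combination w t * hid
      have h2 : β t ^ ((3:ℝ) - 1) * (w t * β t ^ (-2:ℝ) / hh t)
          ≤ β t ^ ((3:ℝ) - 1) * (β t - β (t - 1)) :=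
        mul_le_mul_of_nonneg_left h1 (Real.rpow_pos_of_pos hβt _).le
      rw [hmul] at h2
      exact h2.trans key
  -- by induction: the running sums are below the potentials
  have main : ∀ t, 1 ≤ t → t ≤ T →
      (∑ s ∈ Finset.Icc 1 t, z s / hh s) ≤ β t ^ ε ∧
      (∑ s ∈ Finset.Icc 1 t, w s / hh s) ≤ β t ^ (3:ℝ) := by
    intro t ht
    induction t, ht using Nat.le_induction with
    | base =>
      intro h1T
      have h1 := hstep 1 (Finset.mem_Icc.mpr ⟨le_refl _, h1T⟩)
      have hz0 : β (1-1) ^ ε = 0 := by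
        simp [hβ0, Real.zero_rpow (by linarith : ε ≠ 0)]
      have hw0 : β (1-1) ^ (3:ℝ) = 0 := by
        simp [hβ0, Real.zero_rpow (by norm_num : (3:ℝ) ≠ 0)]
      rw [hz0] at h1
      rw [hw0] at h1
      constructor <;> · simp only [Finset.Icc_self, Finset.sum_singleton]; linarith [h1.1, h1.2]
    | succ n hn ih =>
      intro hle
      have ihn := ih (by omega)
      have hs := hstep (n+1) (Finset.mem_Icc.mpr ⟨by omega, hle⟩)
      have hsimp : (n + 1 - 1 : ℕ) = n := by omega
      rw [hsimp] at hs
      rw [Finset.sum_Icc_succ_top (by omega : 1 ≤ n + 1),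
          Finset.sum_Icc_succ_top (by omega : 1 ≤ n + 1)]
      exact ⟨by linarith [ihn.1, hs.1], by linarith [ihn.2, hs.2]⟩
  -- positivity of running sums
  have hSz : ∀ t ∈ Finset.Icc 1 T, 0 < ∑ s ∈ Finset.Icc 1 t, z s / hh s := by
    intro t ht
    simp only [Finset.mem_Icc] at ht
    refine Finset.sum_pos (fun s hs => ?_) ⟨1, Finset.mem_Icc.mpr ⟨le_refl _, ht.1⟩⟩
    simp only [Finset.mem_Icc] at hs
    have hs' : s ∈ Finset.Icc 1 T := Finset.mem_Icc.mpr ⟨hs.1, hs.2.trans ht.2⟩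
    exact div_pos (hz s hs') (hhh s hs')
  have hSw : ∀ t ∈ Finset.Icc 1 T, 0 < ∑ s ∈ Finset.Icc 1 t, w s / hh s := by
    intro t ht
    simp only [Finset.mem_Icc] at ht
    refine Finset.sum_pos (fun s hs => ?_) ⟨1, Finset.mem_Icc.mpr ⟨le_refl _, ht.1⟩⟩
    simp only [Finset.mem_Icc] at hs
    have hs' : s ∈ Finset.Icc 1 T := Finset.mem_Icc.mpr ⟨hs.1, hs.2.trans ht.2⟩
    exact div_pos (hw s hs') (hhh s hs')
  -- pointwise comparison with the explicit rates
  have hzbd : ∀ t ∈ Finset.Icc 1 T,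
      β t ^ (1 - ε) ≤ (∑ s ∈ Finset.Icc 1 t, z s / hh s) ^ ((1 - ε) / ε) := by
    intro t ht
    simp only [Finset.mem_Icc] at ht
    have hβt := hβpos t (Finset.mem_Icc.mpr ht)
    have h1 := (main t ht.1 ht.2).1
    have hpos := hSz t (Finset.mem_Icc.mpr ht)
    have heq : β t ^ (1 - ε) = (β t ^ ε) ^ ((1 - ε) / ε) := by
      rw [← Real.rpow_mul hβt.le]
      congr 1
      field_simp
    rw [heq]
    exact Real.rpow_le_rpow_of_nonpos hpos h1
      (div_nonpos_of_nonpos_of_nonneg (by linarith) hεpos.le)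
  have hwbd : ∀ t ∈ Finset.Icc 1 T,
      β t ^ (-2:ℝ) ≤ (∑ s ∈ Finset.Icc 1 t, w s / hh s) ^ (-(2:ℝ) / 3) := by
    intro t ht
    simp only [Finset.mem_Icc] at ht
    have hβt := hβpos t (Finset.mem_Icc.mpr ht)
    have h1 := (main t ht.1 ht.2).2
    have hpos := hSw t (Finset.mem_Icc.mpr ht)
    have heq : β t ^ (-2:ℝ) = (β t ^ (3:ℝ)) ^ (-(2:ℝ) / 3) := by
      rw [← Real.rpow_mul hβt.le]
      norm_num
    rw [heq]
    exact Real.rpow_le_rpow_of_nonpos hpos h1 (by norm_num)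
  -- assemble
  have hsum : ∀ t ∈ Finset.Icc 1 T,
      (β t - β (t - 1)) * h t + z t * β t ^ (1 - ε) + w t * β t ^ (-2 : ℝ)
      ≤ 2 * (z t * (∑ s ∈ Finset.Icc 1 t, z s / hh s) ^ ((1 - ε) / ε))
        + 2 * (w t * (∑ s ∈ Finset.Icc 1 t, w s / hh s) ^ (-(2:ℝ) / 3)) := by
    intro t ht
    have hβt := hβpos t ht
    have hhpos := hhh t ht
    have hd : 0 ≤ β t - β (t - 1) := by linarith [hmono t ht]
    have h1 : (β t - β (t - 1)) * h t ≤ (β t - β (t - 1)) * hh t :=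
      mul_le_mul_of_nonneg_left (hhle t ht) hd
    have h2 : (β t - β (t - 1)) * hh t
        = z t * β t ^ (1 - ε) + w t * β t ^ (-2:ℝ) := by
      have := hβrec t ht
      field_simp at this ⊢
      nlinarith [this]
    have h3 : z t * β t ^ (1 - ε)
        ≤ z t * (∑ s ∈ Finset.Icc 1 t, z s / hh s) ^ ((1 - ε) / ε) :=
      mul_le_mul_of_nonneg_left (hzbd t ht) (hz t ht).le
    have h4 : w t * β t ^ (-2:ℝ)
        ≤ w t * (∑ s ∈ Finset.Icc 1 t, w s / hh s) ^ (-(2:ℝ) / 3) :=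
      mul_le_mul_of_nonneg_left (hwbd t ht) (hw t ht).le
    nlinarith [h1, h2, h3, h4]
  calc ∑ t ∈ Finset.Icc 1 T,
        ((β t - β (t - 1)) * h t + z t * β t ^ (1 - ε) + w t * β t ^ (-2 : ℝ))
      ≤ ∑ t ∈ Finset.Icc 1 T,
        (2 * (z t * (∑ s ∈ Finset.Icc 1 t, z s / hh s) ^ ((1 - ε) / ε))
          + 2 * (w t * (∑ s ∈ Finset.Icc 1 t, w s / hh s) ^ (-(2:ℝ) / 3))) :=
        Finset.sum_le_sum hsum
    _ = 2 * ((∑ t ∈ Finset.Icc 1 T,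
            z t * (∑ s ∈ Finset.Icc 1 t, z s / hh s) ^ ((1 - ε) / ε))
          + ∑ t ∈ Finset.Icc 1 T,
            w t * (∑ s ∈ Finset.Icc 1 t, w s / hh s) ^ (-(2 : ℝ) / 3)) := by
        rw [Finset.sum_add_distrib, ← Finset.mul_sum, ← Finset.mul_sum]
        ring
end

section
/- Let ε ∈ (1,2] and T ≥ 1. Let z_t > 0, w_t > 0 and h_t ≥ 0 for t = 1,…,T, and ĥ_t > 0 for t = 2,…,T+1, with h_t ≤ ĥ_t for 2 ≤ t ≤ T. Let β_1 > 0 and define β_t = β_{t−1} + (z_{t−1} β_{t−1}^{1−ε} + w_{t−1} β_{t−1}^{−2})/ĥ_t for t = 2,…,T; set β_0 = 0. Then ∑_{t=1}^T ((β_t − β_{t−1}) h_t + z_t β_t^{1−ε} + w_t β_t^{−2}) ≤ 4·[ ∑_{t=1}^T z_t (∑_{s=1}^t z_s/ĥ_{s+1})^{(1−ε)/ε} + ∑_{t=1}^T w_t (∑_{s=1}^t w_s/ĥ_{s+1})^{−2/3} ] + 8·( (max_{t≤T} z_t)·β_1^{1−ε} + (max_{t≤T} w_t)·β_1^{−2}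 ) + β_1 h_1. -/
/-!
Put `p = (q - 1) / q`, so that `βₜ^{1-q} = (βₜ^q)^{-p}`, with `q = ε` for the `z`-terms and
`q = 3` for the `w`-terms. Bernoulli's inequality turns each step of the recursion into additive
growth of `βₜ^q` by at least `aₜ = zₜ/ĥₜ₊₁` (resp. `wₜ/ĥₜ₊₁`), so `βₜ^q ≥ β₁^q + Sₜ₋₁` for the
partial sums `Sₜ = a₁ + ⋯ + aₜ`. Each term `zₜ (β₁^q + Sₜ₋₁)^{-p}` is then charged by a potential
argument: either it is at most `2 zₜ Sₜ^{-p}`, or the potential `2 z_max (β₁^q + Sₜ)^{-p}` falls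
below half its previous value, and the drop pays for the term. The penalty terms are bounded by the
stability terms of the previous round, since `hₜ ≤ ĥₜ` and `(βₜ - βₜ₋₁) ĥₜ` is exactly that
stability term.
-/

open Finset

theorem rpow_add_le_rpow_add_mul_rpow_one_sub {q y c : ℝ} (hq : 1 ≤ q) (hy : 0 < y)
    (hc : 0 ≤ c) : y ^ q + c ≤ (y + c * y ^ (1 - q)) ^ q := by
  have hyq : y ^ q * y ^ (-q) = 1 := by rw [← Real.rpow_add hy, add_neg_cancel, Real.rpow_zero]
  have hs : 0 ≤ c * y ^ (-q) := by positivity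
  calc y ^ q + c ≤ y ^ q + q * c := by nlinarith
    _ = y ^ q * (1 + q * (c * y ^ (-q))) := by linear_combination (-q * c) * hyq
    _ ≤ y ^ q * (1 + c * y ^ (-q)) ^ q := by
        gcongr; exact one_add_mul_self_le_rpow_one_add (by linarith) hq
    _ = (y * (1 + c * y ^ (-q))) ^ q := (Real.mul_rpow hy.le (by linarith)).symm
    _ = (y + c * y ^ (1 - q)) ^ q := by
        rw [sub_eq_add_neg, Real.rpow_add hy, Real.rpow_one]; ring_nf

theorem rpow_add_sum_le_rpow_of_step {q : ℝ} (hq : 1 ≤ q) {x a : ℕ → ℝ} {m n : ℕ} (hmn : m ≤ n)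
    (hx : ∀ k ∈ Ico m n, 0 < x k) (ha : ∀ k ∈ Ico m n, 0 ≤ a k)
    (hstep : ∀ k ∈ Ico m n, x k + a k * x k ^ (1 - q) ≤ x (k + 1)) :
    x m ^ q + ∑ k ∈ Ico m n, a k ≤ x n ^ q := by
  induction n, hmn using Nat.le_induction with
  | base => simp
  | succ n hmn ih =>
    have hn : n ∈ Ico m (n + 1) := by simp [hmn]
    have hsub : Ico m n ⊆ Ico m (n + 1) := Ico_subset_Ico_right n.le_succ
    have ih := ih (fun k hk ↦ hx k (hsub hk)) (fun k hk ↦ ha k (hsub hk))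
      (fun k hk ↦ hstep k (hsub hk))
    have hxn := hx n hn
    have han := ha n hn
    rw [sum_Ico_succ_top hmn]
    calc x m ^ q + (∑ k ∈ Ico m n, a k + a n) ≤ x n ^ q + a n := by linarith
      _ ≤ (x n + a n * x n ^ (1 - q)) ^ q := rpow_add_le_rpow_add_mul_rpow_one_sub hq hxn han
      _ ≤ x (n + 1) ^ q := Real.rpow_le_rpow (by positivity) (hstep n hn) (by linarith)

theorem charging_step {p u v w z Z : ℝ} (hp : 0 < p) (hu : 0 < u) (hv : 0 < v) (huw : u ≤ w)
    (hvw : v ≤ w) (hz : 0 ≤ z) (hzZ : z ≤ Z) :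
    z * u ^ (-p) + 2 * Z * w ^ (-p) ≤ 2 * z * v ^ (-p) + 2 * Z * u ^ (-p) := by
  have hpow : (2 ^ (1 / p) * u) ^ (-p) = 2⁻¹ * u ^ (-p) := by
    rw [Real.mul_rpow (by positivity) hu.le, ← Real.rpow_mul zero_le_two,
      show 1 / p * -p = -1 by field_simp, Real.rpow_neg_one]
  have hwu : w ^ (-p) ≤ u ^ (-p) := Real.rpow_le_rpow_of_nonpos hu huw (by linarith)
  have hwv : w ^ (-p) ≤ v ^ (-p) := Real.rpow_le_rpow_of_nonpos hv hvw (by linarith)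
  have hu0 : 0 ≤ u ^ (-p) := by positivity
  have hv0 : 0 ≤ v ^ (-p) := by positivity
  by_cases hc : v ≤ 2 ^ (1 / p) * u
  · have huv : 2⁻¹ * u ^ (-p) ≤ v ^ (-p) :=
      hpow ▸ Real.rpow_le_rpow_of_nonpos hv hc (by linarith)
    nlinarith
  · have hvu : v ^ (-p) ≤ 2⁻¹ * u ^ (-p) :=
      hpow ▸ Real.rpow_le_rpow_of_nonpos (by positivity) (not_le.mp hc).le (by linarith)
    nlinarith

theorem sum_mul_rpow_neg_add_sum_le {p b Z : ℝ} (hp : 0 < p) (hb : 0 < b) {z a : ℕ → ℝ}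
    {m n : ℕ} (hmn : m ≤ n) (ha : ∀ k ∈ Ico m n, 0 < a k) (hz : ∀ k ∈ Ico m n, 0 ≤ z k)
    (hzZ : ∀ k ∈ Ico m n, z k ≤ Z) :
    ∑ t ∈ Ico m n, z t * (b + ∑ s ∈ Ico m t, a s) ^ (-p) + 2 * Z * (b + ∑ s ∈ Ico m n, a s) ^ (-p)
      ≤ 2 * ∑ t ∈ Ico m n, z t * (∑ s ∈ Ico m (t + 1), a s) ^ (-p) + 2 * Z * b ^ (-p) := by
  induction n, hmn using Nat.le_induction with
  | base => simp
  | succ n hmn ih =>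
    have hn : n ∈ Ico m (n + 1) := by simp [hmn]
    have hsub : Ico m n ⊆ Ico m (n + 1) := Ico_subset_Ico_right n.le_succ
    have ih := ih (fun k hk ↦ ha k (hsub hk)) (fun k hk ↦ hz k (hsub hk))
      (fun k hk ↦ hzZ k (hsub hk))
    have hS : 0 ≤ ∑ s ∈ Ico m n, a s := sum_nonneg fun k hk ↦ (ha k (hsub hk)).le
    have han := ha n hn
    have step := charging_step (u := b + ∑ s ∈ Ico m n, a s) (v := ∑ s ∈ Ico m n, a s + a n)
      (w := b + (∑ s ∈ Ico m n, a s + a n)) hp (by linarith) (by linarith) (by linarith)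
      (by linarith) (hz n hn) (hzZ n hn)
    rw [sum_Ico_succ_top hmn, sum_Ico_succ_top hmn, sum_Ico_succ_top hmn, sum_Ico_succ_top hmn]
    linarith

theorem sum_mul_rpow_one_sub_le {q Z : ℝ} (hq : 1 < q) {x z a : ℕ → ℝ} {m n : ℕ} (hmn : m ≤ n)
    (hx : ∀ k ∈ Icc m n, 0 < x k) (ha : ∀ k ∈ Icc m n, 0 < a k)
    (hz : ∀ k ∈ Icc m n, 0 ≤ z k) (hzZ : ∀ k ∈ Icc m n, z k ≤ Z)
    (hstep : ∀ k ∈ Ico m n, x k + a k * x k ^ (1 - q) ≤ x (k + 1)) :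
    ∑ t ∈ Icc m n, z t * x t ^ (1 - q)
      ≤ 2 * ∑ t ∈ Icc m n, z t * (∑ s ∈ Icc m t, a s) ^ ((1 - q) / q)
        + 2 * Z * x m ^ (1 - q) := by
  set p := (q - 1) / q
  have hp : 0 < p := div_pos (by linarith) (by linarith)
  have hpow {y : ℝ} (hy : 0 < y) : (y ^ q) ^ (-p) = y ^ (1 - q) := by
    rw [← Real.rpow_mul hy.le, show q * -p = 1 - q by simp only [p]; field_simp; ring]
  have hxm : 0 < x m := hx m (left_mem_Icc.mpr hmn)
  have hterm : ∀ t ∈ Icc m n,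
      z t * x t ^ (1 - q) ≤ z t * (x m ^ q + ∑ s ∈ Ico m t, a s) ^ (-p) := by
    intro t ht
    have hsub : Ico m t ⊆ Icc m n := fun k hk ↦ by
      simp only [mem_Ico, mem_Icc] at hk ht ⊢; omega
    have hgrow := rpow_add_sum_le_rpow_of_step hq.le (mem_Icc.mp ht).1
      (fun k hk ↦ hx k (hsub hk)) (fun k hk ↦ (ha k (hsub hk)).le)
      (fun k hk ↦ hstep k (Ico_subset_Ico_right (mem_Icc.mp ht).2 hk))
    have hbase : 0 < x m ^ q + ∑ s ∈ Ico m t, a s :=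
      add_pos_of_pos_of_nonneg (by positivity) (sum_nonneg fun k hk ↦ (ha k (hsub hk)).le)
    rw [← hpow (hx t ht)]
    exact mul_le_mul_of_nonneg_left (Real.rpow_le_rpow_of_nonpos hbase hgrow (by linarith))
      (hz t ht)
  have hcharge := sum_mul_rpow_neg_add_sum_le hp (Real.rpow_pos_of_pos hxm q)
    (m := m) (n := n + 1) (by omega) (z := z) (a := a) (Z := Z)
    (by rwa [Ico_add_one_right_eq_Icc]) (by rwa [Ico_add_one_right_eq_Icc])
    (by rwa [Ico_add_one_right_eq_Icc])
  simp only [Ico_add_one_right_eq_Icc, hpow hxm] at hcharge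
  have hpot : 0 ≤ 2 * Z * (x m ^ q + ∑ s ∈ Icc m n, a s) ^ (-p) :=
    mul_nonneg (by linarith [hz m (left_mem_Icc.mpr hmn), hzZ m (left_mem_Icc.mpr hmn)])
      (Real.rpow_nonneg (add_nonneg (by positivity) (sum_nonneg fun k hk ↦ (ha k hk).le)) _)
  rw [show (1 - q) / q = -p by ring]
  linarith [sum_le_sum hterm]

theorem sum_sub_mul_le_of_eq_add_div {x g h H : ℕ → ℝ} {n : ℕ} (hn : 1 ≤ n) (hx0 : x 0 = 0)
    (hg : ∀ k ∈ Ico 1 n, 0 ≤ g k) (hH : ∀ k ∈ Ico 1 n, 0 < H (k + 1))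
    (hhH : ∀ k ∈ Ico 1 n, h (k + 1) ≤ H (k + 1))
    (hstep : ∀ k ∈ Ico 1 n, x (k + 1) = x k + g k / H (k + 1)) :
    ∑ t ∈ Icc 1 n, (x t - x (t - 1)) * h t ≤ x 1 * h 1 + ∑ k ∈ Ico 1 n, g k := by
  induction n, hn using Nat.le_induction with
  | base => simp [hx0]
  | succ n hn ih =>
    have hk : n ∈ Ico 1 (n + 1) := by simp [hn]
    have hsub : Ico 1 n ⊆ Ico 1 (n + 1) := Ico_subset_Ico_right n.le_succ
    have ih := ih (fun k hk ↦ hg k (hsub hk)) (fun k hk ↦ hH k (hsub hk))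
      (fun k hk ↦ hhH k (hsub hk)) (fun k hk ↦ hstep k (hsub hk))
    have hlast : (x (n + 1) - x n) * h (n + 1) ≤ g n := by
      rw [hstep n hk, add_sub_cancel_left]
      calc g n / H (n + 1) * h (n + 1) ≤ g n / H (n + 1) * H (n + 1) :=
            mul_le_mul_of_nonneg_left (hhH n hk) (div_nonneg (hg n hk) (hH n hk).le)
        _ = g n := div_mul_cancel₀ _ (hH n hk).ne'
    rw [sum_Icc_succ_top (by omega), sum_Ico_succ_top hn, Nat.add_sub_cancel]
    linarith

theorem add_div_mul_rpow_le_of_eq_add_div {x y a b H r s : ℝ} (hx : 0 < x) (hb : 0 ≤ b)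
    (hH : 0 < H) (hy : y = x + (a * x ^ r + b * x ^ s) / H) : x + a / H * x ^ r ≤ y := by
  have : 0 ≤ b * x ^ s / H := by positivity
  rw [hy, add_div, div_mul_eq_mul_div]
  linarith

theorem pos_of_eq_add_div {x a b H : ℕ → ℝ} {r s : ℝ} {m n : ℕ} (hm : 0 < x m)
    (ha : ∀ k ∈ Ico m n, 0 ≤ a k) (hb : ∀ k ∈ Ico m n, 0 ≤ b k) (hH : ∀ k ∈ Ico m n, 0 < H k)
    (hstep : ∀ k ∈ Ico m n, x (k + 1) = x k + (a k * x k ^ r + b k * x k ^ s) / H k) :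
    ∀ k ∈ Icc m n, 0 < x k := by
  intro k hk
  obtain ⟨hmk, hkn⟩ := mem_Icc.mp hk
  induction k, hmk using Nat.le_induction with
  | base => exact hm
  | succ k hmk ih =>
    have hk : k ∈ Ico m n := by simp only [mem_Ico]; omega
    have hxk := ih (by simp only [mem_Icc]; omega) (by omega)
    have := ha k hk; have := hb k hk; have := hH k hk
    rw [hstep k hk]
    positivity

theorem explicit_htspm_bound_general
    (ε : ℝ) (hε1 : 1 < ε)
    (T : ℕ) (hT : 1 ≤ T)
    (z w hh h β : ℕ → ℝ)
    (hz : ∀ t ∈ Finset.Icc 1 T, 0 < z t)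
    (hw : ∀ t ∈ Finset.Icc 1 T, 0 < w t)
    (hhh : ∀ t ∈ Finset.Icc 2 (T + 1), 0 < hh t)
    (hhle : ∀ t ∈ Finset.Icc 2 T, h t ≤ hh t)
    (hβ0 : β 0 = 0) (hβ1 : 0 < β 1)
    (hβrec : ∀ t ∈ Finset.Icc 2 T,
      β t = β (t - 1) +
        (z (t - 1) * β (t - 1) ^ (1 - ε) + w (t - 1) * β (t - 1) ^ (-2 : ℝ)) / hh t) :
    ∑ t ∈ Finset.Icc 1 T,
        ((β t - β (t - 1)) * h t + z t * β t ^ (1 - ε) + w t * β t ^ (-2 : ℝ))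
      ≤ 4 * ((∑ t ∈ Finset.Icc 1 T,
            z t * (∑ s ∈ Finset.Icc 1 t, z s / hh (s + 1)) ^ ((1 - ε) / ε))
          + ∑ t ∈ Finset.Icc 1 T,
            w t * (∑ s ∈ Finset.Icc 1 t, w s / hh (s + 1)) ^ (-(2 : ℝ) / 3))
        + 8 * (((Finset.Icc 1 T).sup' (Finset.nonempty_Icc.mpr hT) z) * β 1 ^ (1 - ε)
            + ((Finset.Icc 1 T).sup' (Finset.nonempty_Icc.mpr hT) w) * β 1 ^ (-2 : ℝ))
        + β 1 * h 1 := by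
  have hIco {k : ℕ} (hk : k ∈ Ico 1 T) : k ∈ Icc 1 T ∧ k + 1 ∈ Icc 2 T := by
    simp only [mem_Ico, mem_Icc] at hk ⊢; omega
  have hhh_succ {k : ℕ} (hk : k ∈ Icc 1 T) : 0 < hh (k + 1) :=
    hhh (k + 1) (by simp only [mem_Icc] at hk ⊢; omega)
  have hstep : ∀ k ∈ Ico 1 T,
      β (k + 1) = β k + (z k * β k ^ (1 - ε) + w k * β k ^ (-2 : ℝ)) / hh (k + 1) :=
    fun k hk ↦ by simpa using hβrec (k + 1) (hIco hk).2
  have hβ := pos_of_eq_add_div hβ1 (fun k hk ↦ (hz k (hIco hk).1).le)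
    (fun k hk ↦ (hw k (hIco hk).1).le) (fun k hk ↦ hhh_succ (hIco hk).1) hstep
  have hg : ∀ k ∈ Icc 1 T, 0 ≤ z k * β k ^ (1 - ε) + w k * β k ^ (-2 : ℝ) := fun k hk ↦ by
    have := hz k hk; have := hw k hk; have := hβ k hk; positivity
  have hgrowth : ∀ k ∈ Ico 1 T, β k + z k / hh (k + 1) * β k ^ (1 - ε) ≤ β (k + 1) ∧
      β k + w k / hh (k + 1) * β k ^ (1 - (3 : ℝ)) ≤ β (k + 1) := fun k hk ↦ by
    have hk' := (hIco hk).1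
    refine ⟨add_div_mul_rpow_le_of_eq_add_div (hβ k hk') (hw k hk').le (hhh_succ hk')
      (hstep k hk), add_div_mul_rpow_le_of_eq_add_div (s := 1 - ε) (hβ k hk') (hz k hk').le
      (hhh_succ hk') ?_⟩
    rw [hstep k hk, add_comm (z k * _)]
    norm_num
  have hZ := sum_mul_rpow_one_sub_le (Z := (Icc 1 T).sup' (nonempty_Icc.mpr hT) z) hε1 hT hβ
    (fun k hk ↦ div_pos (hz k hk) (hhh_succ hk)) (fun k hk ↦ (hz k hk).le)
    (fun k hk ↦ le_sup' z hk) (fun k hk ↦ (hgrowth k hk).1)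
  have hW := sum_mul_rpow_one_sub_le (Z := (Icc 1 T).sup' (nonempty_Icc.mpr hT) w)
    (by norm_num) hT hβ (fun k hk ↦ div_pos (hw k hk) (hhh_succ hk)) (fun k hk ↦ (hw k hk).le)
    (fun k hk ↦ le_sup' w hk) (fun k hk ↦ (hgrowth k hk).2)
  rw [show (1 : ℝ) - 3 = -2 by norm_num, show (-2 : ℝ) / 3 = -(2 : ℝ) / 3 by norm_num] at hW
  have hpen := sum_sub_mul_le_of_eq_add_div hT hβ0 (fun k hk ↦ hg k (hIco hk).1)
    (fun k hk ↦ hhh_succ (hIco hk).1) (fun k hk ↦ hhle _ (hIco hk).2) hstep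
  have hIco_le_Icc := sum_le_sum_of_subset_of_nonneg Ico_subset_Icc_self fun k hk _ ↦ hg k hk
  have h1 : 1 ∈ Icc 1 T := left_mem_Icc.mpr hT
  have hZ0 := mul_nonneg ((hz 1 h1).le.trans (le_sup' z h1)) (Real.rpow_pos_of_pos hβ1 (1 - ε)).le
  have hW0 := mul_nonneg ((hw 1 h1).le.trans (le_sup' w h1)) (Real.rpow_pos_of_pos hβ1 (-2)).le
  simp only [sum_add_distrib] at hpen hIco_le_Icc ⊢
  linarith

/-- second part of Lemma 5: the explicit HT-SPM learning rate.
With `β₀ = 0`, `β₁ > 0`, and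
`β_t = β_{t−1} + (z_{t−1} β_{t−1}^{1−ε} + w_{t−1} β_{t−1}^{−2})/ĥ_t` for `t = 2,…,T`,
`F(β; z, w, h) ≤ 4 G(z, w, ĥ_{2:T+1}) + 8(z_max β₁^{1−ε} + w_max β₁^{−2}) + β₁ h₁`. -/
theorem explicit_htspm_bound
    (ε : ℝ) (hε1 : 1 < ε) (hε2 : ε ≤ 2)
    (T : ℕ) (hT : 1 ≤ T)
    (z w hh h β : ℕ → ℝ)
    (hz : ∀ t ∈ Finset.Icc 1 T, 0 < z t)
    (hw : ∀ t ∈ Finset.Icc 1 T, 0 < w t)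
    (hhh : ∀ t ∈ Finset.Icc 2 (T + 1), 0 < hh t)
    (hh0 : ∀ t ∈ Finset.Icc 1 T, 0 ≤ h t)
    (hhle : ∀ t ∈ Finset.Icc 2 T, h t ≤ hh t)
    (hβ0 : β 0 = 0) (hβ1 : 0 < β 1)
    (hβrec : ∀ t ∈ Finset.Icc 2 T,
      β t = β (t - 1) +
        (z (t - 1) * β (t - 1) ^ (1 - ε) + w (t - 1) * β (t - 1) ^ (-2 : ℝ)) / hh t) :
    ∑ t ∈ Finset.Icc 1 T,
        ((β t - β (t - 1)) * h t + z t * β t ^ (1 - ε) + w t * β t ^ (-2 : ℝ))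
      ≤ 4 * ((∑ t ∈ Finset.Icc 1 T,
            z t * (∑ s ∈ Finset.Icc 1 t, z s / hh (s + 1)) ^ ((1 - ε) / ε))
          + ∑ t ∈ Finset.Icc 1 T,
            w t * (∑ s ∈ Finset.Icc 1 t, w s / hh (s + 1)) ^ (-(2 : ℝ) / 3))
        + 8 * (((Finset.Icc 1 T).sup' (Finset.nonempty_Icc.mpr hT) z) * β 1 ^ (1 - ε)
            + ((Finset.Icc 1 T).sup' (Finset.nonempty_Icc.mpr hT) w) * β 1 ^ (-2 : ℝ))
        + β 1 * h 1 :=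
  explicit_htspm_bound_general ε hε1 T hT z w hh h β hz hw hhh hhle hβ0 hβ1 hβrec
end

section
/- Let ε ∈ (1,2], T ≥ 1, and let z_t, w_t, h_t > 0 for t = 1,…,T, with h_max = max_{t≤T} h_t. Then ∑_{t=1}^T z_t (∑_{s=1}^t z_s/h_s)^{(1−ε)/ε} + ∑_{t=1}^T w_t (∑_{s=1}^t w_s/h_s)^{−2/3} ≤ ε · h_max^{1−1/ε} · (∑_{t=1}^T z_t)^{1/ε} + 3 · h_max^{2/3} · (∑_{t=1}^T w_t)^{1/3}. -/
open Finset

private lemma key_step (α a b : ℝ) (hα0 : 0 < α) (hα1 : α ≤ 1) (ha : 0 < a) (hb : 0 ≤ b) :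
    a * (b + a) ^ (α - 1) ≤ (1 / α) * ((b + a) ^ α - b ^ α) := by
  set s : ℝ := b + a with hs
  have hspos : 0 < s := by positivity
  have hx : -1 ≤ b / s - 1 := by
    have : 0 ≤ b / s := by positivity
    linarith
  have hber := rpow_one_add_le_one_add_mul_self hx hα0.le hα1
  rw [show (1 + (b / s - 1)) = b / s by ring] at hber
  rw [Real.div_rpow hb hspos.le] at hber
  have h2 : b ^ α ≤ (1 + α * (b / s - 1)) * s ^ α := by
    rw [div_le_iff₀ (by positivity : (0:ℝ) < s ^ α)] at hber
    linarith
  have hst : s ^ α = s * s ^ (α - 1) := by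
    rw [show α = 1 + (α - 1) by ring, Real.rpow_add hspos, Real.rpow_one]
    ring_nf
  set t : ℝ := s ^ (α - 1) with ht
  have hbs : b / s * s = b := div_mul_cancel₀ b hspos.ne'
  have h3 : (1 + α * (b / s - 1)) * (s * t) = s * t + α * (b * t) - α * (s * t) := by
    linear_combination (α * t) * hbs
  rw [hst] at h2
  rw [h3] at h2
  rw [div_mul_eq_mul_div, le_div_iff₀ hα0]
  rw [hst]
  have h4 : α * (s * t) - α * (b * t) = α * (a * t) := by rw [hs]; ring
  linarith

private lemma sum_rpow_le (α : ℝ) (hα0 : 0 < α) (hα1 : α ≤ 1) (T : ℕ) (a : ℕ → ℝ)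
    (ha : ∀ t ∈ Finset.Icc 1 T, 0 < a t) :
    ∑ t ∈ Finset.Icc 1 T, a t * (∑ s ∈ Finset.Icc 1 t, a s) ^ (α - 1)
      ≤ (1 / α) * (∑ t ∈ Finset.Icc 1 T, a t) ^ α := by
  induction T with
  | zero =>
      simp [Real.zero_rpow hα0.ne']
  | succ T ih =>
      have h1T : (1:ℕ) ≤ T + 1 := by omega
      have hsub : ∀ t ∈ Finset.Icc 1 T, 0 < a t := fun t ht => by
        refine ha t ?_
        simp only [Finset.mem_Icc] at ht ⊢; omega
      have hb : 0 ≤ ∑ t ∈ Finset.Icc 1 T, a t :=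
        Finset.sum_nonneg fun t ht => (hsub t ht).le
      have haT : 0 < a (T + 1) := ha _ (by simp [Finset.mem_Icc])
      rw [Finset.sum_Icc_succ_top h1T, Finset.sum_Icc_succ_top h1T]
      have hkey := key_step α (a (T + 1)) (∑ t ∈ Finset.Icc 1 T, a t) hα0 hα1 haT hb
      have hih := ih hsub
      have hsum : ∑ s ∈ Finset.Icc 1 (T + 1), a s
          = (∑ t ∈ Finset.Icc 1 T, a t) + a (T + 1) := Finset.sum_Icc_succ_top h1T a
      linarith

private lemma term_bound (α : ℝ) (hα0 : 0 < α) (hα1 : α ≤ 1) (T : ℕ)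
    (z h : ℕ → ℝ) (hz : ∀ t ∈ Finset.Icc 1 T, 0 < z t)
    (hh : ∀ t ∈ Finset.Icc 1 T, 0 < h t)
    (H : ℝ) (hH : 0 < H) (hHle : ∀ t ∈ Finset.Icc 1 T, h t ≤ H) :
    ∑ t ∈ Finset.Icc 1 T, z t * (∑ s ∈ Finset.Icc 1 t, z s / h s) ^ (α - 1)
      ≤ (1 / α) * H ^ (1 - α) * (∑ t ∈ Finset.Icc 1 T, z t) ^ α := by
  have step1 : ∑ t ∈ Finset.Icc 1 T, z t * (∑ s ∈ Finset.Icc 1 t, z s / h s) ^ (α - 1)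
      ≤ ∑ t ∈ Finset.Icc 1 T, z t * (∑ s ∈ Finset.Icc 1 t, z s / H) ^ (α - 1) := by
    refine Finset.sum_le_sum fun t ht => ?_
    have htT : t ≤ T := (Finset.mem_Icc.mp ht).2
    have ht1 : 1 ≤ t := (Finset.mem_Icc.mp ht).1
    have hsubmem : ∀ s ∈ Finset.Icc 1 t, s ∈ Finset.Icc 1 T := fun s hs => by
      simp only [Finset.mem_Icc] at hs ⊢; omega
    have hYpos : 0 < ∑ s ∈ Finset.Icc 1 t, z s / H := by
      refine Finset.sum_pos (fun s hs => ?_) (Finset.nonempty_Icc.mpr ht1)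
      exact div_pos (hz s (hsubmem s hs)) hH
    have hYX : (∑ s ∈ Finset.Icc 1 t, z s / H) ≤ ∑ s ∈ Finset.Icc 1 t, z s / h s := by
      refine Finset.sum_le_sum fun s hs => ?_
      have := hsubmem s hs
      gcongr
      exacts [(hz s this).le, hh s this, hHle s this]
    have := Real.rpow_le_rpow_of_nonpos hYpos hYX (by linarith : α - 1 ≤ 0)
    exact mul_le_mul_of_nonneg_left this (hz t ht).le
  have step2 : ∑ t ∈ Finset.Icc 1 T, z t * (∑ s ∈ Finset.Icc 1 t, z s / H) ^ (α - 1)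
      = H * ∑ t ∈ Finset.Icc 1 T, (z t / H) * (∑ s ∈ Finset.Icc 1 t, z s / H) ^ (α - 1) := by
    rw [Finset.mul_sum]
    refine Finset.sum_congr rfl fun t ht => ?_
    field_simp
  have step3 := sum_rpow_le α hα0 hα1 T (fun s => z s / H)
    (fun t ht => div_pos (hz t ht) hH)
  have hS : 0 ≤ ∑ t ∈ Finset.Icc 1 T, z t :=
    Finset.sum_nonneg fun t ht => (hz t ht).le
  have step4 : H * ((1 / α) * (∑ t ∈ Finset.Icc 1 T, z t / H) ^ α)
      = (1 / α) * H ^ (1 - α) * (∑ t ∈ Finset.Icc 1 T, z t) ^ α := by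
    rw [← Finset.sum_div, Real.div_rpow hS hH.le, Real.rpow_sub hH, Real.rpow_one]
    ring
  calc ∑ t ∈ Finset.Icc 1 T, z t * (∑ s ∈ Finset.Icc 1 t, z s / h s) ^ (α - 1)
      ≤ ∑ t ∈ Finset.Icc 1 T, z t * (∑ s ∈ Finset.Icc 1 t, z s / H) ^ (α - 1) := step1
    _ = H * ∑ t ∈ Finset.Icc 1 T, (z t / H) * (∑ s ∈ Finset.Icc 1 t, z s / H) ^ (α - 1) := step2
    _ ≤ H * ((1 / α) * (∑ t ∈ Finset.Icc 1 T, z t / H) ^ α) := by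
        exact mul_le_mul_of_nonneg_left step3 hH.le
    _ = (1 / α) * H ^ (1 - α) * (∑ t ∈ Finset.Icc 1 T, z t) ^ α := step4

/-- single-bucket case `J = 0` of Lemma 6: worst-case bound on `G`.
For `ε ∈ (1,2]` and positive `z_t, w_t, h_t`,
`G(z,w,h) ≤ ε h_max^{1−1/ε} (∑ z_t)^{1/ε} + 3 h_max^{2/3} (∑ w_t)^{1/3}`. -/
theorem G_worst_case_bound
    (ε : ℝ) (hε1 : 1 < ε) (hε2 : ε ≤ 2)
    (T : ℕ) (hT : 1 ≤ T)
    (z w h : ℕ → ℝ)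
    (hz : ∀ t ∈ Finset.Icc 1 T, 0 < z t)
    (hw : ∀ t ∈ Finset.Icc 1 T, 0 < w t)
    (hh : ∀ t ∈ Finset.Icc 1 T, 0 < h t) :
    (∑ t ∈ Finset.Icc 1 T, z t * (∑ s ∈ Finset.Icc 1 t, z s / h s) ^ ((1 - ε) / ε))
        + ∑ t ∈ Finset.Icc 1 T, w t * (∑ s ∈ Finset.Icc 1 t, w s / h s) ^ (-(2 : ℝ) / 3)
      ≤ ε * ((Finset.Icc 1 T).sup' (Finset.nonempty_Icc.mpr hT) h) ^ (1 - 1 / ε) *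
          (∑ t ∈ Finset.Icc 1 T, z t) ^ (1 / ε)
        + 3 * ((Finset.Icc 1 T).sup' (Finset.nonempty_Icc.mpr hT) h) ^ ((2 : ℝ) / 3) *
          (∑ t ∈ Finset.Icc 1 T, w t) ^ ((1 : ℝ) / 3) := by
  have hε0 : 0 < ε := by linarith
  set H : ℝ := (Finset.Icc 1 T).sup' (Finset.nonempty_Icc.mpr hT) h with hHdef
  have hH : 0 < H := by
    obtain ⟨t, ht, hEq⟩ := Finset.exists_mem_eq_sup' (Finset.nonempty_Icc.mpr hT) h
    rw [hHdef, hEq]; exact hh t ht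
  have hHle : ∀ t ∈ Finset.Icc 1 T, h t ≤ H := fun t ht => Finset.le_sup' h ht
  have hα1 : (0:ℝ) < 1 / ε := by positivity
  have hα1' : 1 / ε ≤ 1 := by
    rw [div_le_one hε0]; linarith
  have h1 := term_bound (1 / ε) hα1 hα1' T z h hz hh H hH hHle
  have h2 := term_bound (1 / 3) (by norm_num) (by norm_num) T w h hw hh H hH hHle
  rw [show (1:ℝ) / ε - 1 = (1 - ε) / ε by field_simp] at h1
  rw [show (1:ℝ) / (1 / ε) = ε by field_simp] at h1
  rw [show (1:ℝ) / 3 - 1 = -(2:ℝ) / 3 by norm_num] at h2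
  rw [show (1:ℝ) / (1 / 3 : ℝ) = 3 by norm_num] at h2
  rw [show (1:ℝ) - 1 / 3 = (2:ℝ) / 3 by norm_num] at h2
  linarith
end

section
/- Let ε ∈ (1,2]. There exists a constant c > 0, depending only on ε, such that for all nonnegative reals a, κ, C, Q and every real number R: if R ≤ a·Q^{1/ε} + κ and R ≥ Q/2 − C, then R ≤ c·( a^{ε/(ε−1)} + a·C^{1/ε} + κ ). -/
/-!
With `q = ε/(ε-1)` the conjugate exponent, the two hypotheses combine to
`Q ≤ 2a Q^{1/ε} + 2(κ + C)`, and an inequality `x ≤ b x^{1/ε} + d` forces `x ≤ (2b)^q + 2d`: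
either `d` dominates, or `x^{1/q} = x / x^{1/ε} < 2b`. Raising the resulting bound on `Q` to the
power `1/ε` (which is subadditive) and applying Young's inequality to the term `a κ^{1/ε}` bounds
`a Q^{1/ε} + κ`, and hence `R`, by a multiple of `a^q + a C^{1/ε} + κ`.
-/

open Real

lemma mul_rpow_one_div_le_rpow_add {p q a b : ℝ} (hpq : p.HolderConjugate q) (ha : 0 ≤ a)
    (hb : 0 ≤ b) : a * b ^ (1 / p) ≤ a ^ q + b :=
  calc a * b ^ (1 / p) ≤ a ^ q / q + (b ^ (1 / p)) ^ p / p :=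
        young_inequality_of_nonneg ha (by positivity) hpq.symm
    _ = a ^ q / q + b / p := by rw [one_div, rpow_inv_rpow hb hpq.ne_zero]
    _ ≤ a ^ q + b := by
      gcongr
      · exact div_le_self (by positivity) hpq.symm.lt.le
      · exact div_le_self hb hpq.lt.le

lemma le_rpow_add_of_le_mul_rpow_add {p q x b d : ℝ} (hpq : p.HolderConjugate q)
    (hx : 0 ≤ x) (hb : 0 ≤ b) (hd : 0 ≤ d) (h : x ≤ b * x ^ (1 / p) + d) :
    x ≤ (2 * b) ^ q + 2 * d := by
  by_cases hdom : b * x ^ (1 / p) ≤ d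
  · have : 0 ≤ (2 * b) ^ q := by positivity
    linarith
  · have hlt : x ^ (1 / q) * x ^ (1 / p) < 2 * b * x ^ (1 / p) := by
      rw [← rpow_add' hx (by rw [hpq.symm.one_div_add_one_div]; norm_num),
        hpq.symm.one_div_add_one_div, div_one, rpow_one]
      linarith
    have hroot : x ^ (1 / q) ≤ 2 * b :=
      (lt_of_mul_lt_mul_right hlt (by positivity)).le
    calc x = (x ^ (1 / q)) ^ q := by rw [one_div, rpow_inv_rpow hx hpq.symm.ne_zero]
      _ ≤ (2 * b) ^ q := rpow_le_rpow (by positivity) hroot hpq.symm.nonneg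
      _ ≤ (2 * b) ^ q + 2 * d := by linarith

lemma rpow_one_div_le_of_le_mul_rpow_add {p q x b d : ℝ} (hpq : p.HolderConjugate q)
    (hx : 0 ≤ x) (hb : 0 ≤ b) (hd : 0 ≤ d) (h : x ≤ b * x ^ (1 / p) + d) :
    x ^ (1 / p) ≤ (2 * b) ^ (q - 1) + (2 * d) ^ (1 / p) :=
  calc x ^ (1 / p) ≤ ((2 * b) ^ q + 2 * d) ^ (1 / p) :=
        rpow_le_rpow hx (le_rpow_add_of_le_mul_rpow_add hpq hx hb hd h) hpq.one_div_nonneg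
    _ ≤ ((2 * b) ^ q) ^ (1 / p) + (2 * d) ^ (1 / p) :=
        rpow_add_le_add_rpow (by positivity) (by positivity) hpq.one_div_nonneg
          (div_le_one_of_le₀ hpq.lt.le hpq.nonneg)
    _ = (2 * b) ^ (q - 1) + (2 * d) ^ (1 / p) := by
        rw [← rpow_mul (by positivity), mul_one_div, hpq.symm.div_conj_eq_sub_one]

theorem self_bounding_single_general
    (ε : ℝ) (hε1 : 1 < ε) :
    ∃ c : ℝ, 0 < c ∧
      ∀ a κ C Q : ℝ, ∀ R : ℝ, 0 ≤ a → 0 ≤ κ → 0 ≤ C → 0 ≤ Q →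
        R ≤ a * Q ^ (1 / ε) + κ → Q / 2 - C ≤ R →
        R ≤ c * (a ^ (ε / (ε - 1)) + a * C ^ (1 / ε) + κ) := by
  set q := ε / (ε - 1)
  have hq : ε.HolderConjugate q := .conjExponent hε1
  have hp₁ : 1 / ε ≤ 1 := div_le_one_of_le₀ hε1.le hq.nonneg
  refine ⟨4 ^ (q - 1) + 5, by positivity, fun a κ C Q R ha hκ hC hQ hR hRQ => ?_⟩
  have hQ_rpow : Q ^ (1 / ε) ≤ (4 * a) ^ (q - 1) + (4 * (κ + C)) ^ (1 / ε) :=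
    calc Q ^ (1 / ε) ≤ (2 * (2 * a)) ^ (q - 1) + (2 * (2 * (κ + C))) ^ (1 / ε) :=
          rpow_one_div_le_of_le_mul_rpow_add hq hQ (by positivity) (by positivity) (by linarith)
      _ = (4 * a) ^ (q - 1) + (4 * (κ + C)) ^ (1 / ε) := by ring_nf
  have hκC : (4 * (κ + C)) ^ (1 / ε) ≤ 4 * κ ^ (1 / ε) + 4 * C ^ (1 / ε) := by
    rw [mul_rpow (by norm_num) (by positivity), ← mul_add]
    gcongr
    · exact rpow_le_self_of_one_le (by norm_num) hp₁
    · exact rpow_add_le_add_rpow hκ hC hq.one_div_nonneg hp₁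
  have ha_rpow : a * (4 * a) ^ (q - 1) = 4 ^ (q - 1) * a ^ q := by
    rw [mul_rpow (by norm_num) ha, mul_left_comm, ← rpow_one_add' ha (by linarith [hq.symm.lt]),
      add_sub_cancel]
  have hc : 0 ≤ (4 : ℝ) ^ (q - 1) := by positivity
  have hB : 0 ≤ a * C ^ (1 / ε) := by positivity
  calc R ≤ a * Q ^ (1 / ε) + κ := hR
    _ ≤ a * ((4 * a) ^ (q - 1) + 4 * κ ^ (1 / ε) + 4 * C ^ (1 / ε)) + κ := by
        gcongr; linarith
    _ = 4 ^ (q - 1) * a ^ q + 4 * (a * κ ^ (1 / ε)) + 4 * (a * C ^ (1 / ε)) + κ := by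
        rw [← ha_rpow]; ring
    _ ≤ 4 ^ (q - 1) * a ^ q + 4 * (a ^ q + κ) + 4 * (a * C ^ (1 / ε)) + κ := by
        gcongr; exact mul_rpow_one_div_le_rpow_add hq ha hκ
    _ ≤ (4 ^ (q - 1) + 5) * (a ^ q + a * C ^ (1 / ε) + κ) := by
        nlinarith [mul_nonneg hc hB, mul_nonneg hc hκ, rpow_nonneg ha q]

/-- single-term self-bounding argument from the proof of Theorem 1.
For `ε ∈ (1,2]` there is a constant `c > 0` depending only on `ε` such that for all
nonnegative `a, κ, C, Q` and real `R`: if `R ≤ a Q^{1/ε} + κ` and `R ≥ Q/2 − C`, then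
`R ≤ c (a^{ε/(ε−1)} + a C^{1/ε} + κ)`. -/
theorem self_bounding_single
    (ε : ℝ) (hε1 : 1 < ε) (hε2 : ε ≤ 2) :
    ∃ c : ℝ, 0 < c ∧
      ∀ a κ C Q : ℝ, ∀ R : ℝ, 0 ≤ a → 0 ≤ κ → 0 ≤ C → 0 ≤ Q →
        R ≤ a * Q ^ (1 / ε) + κ → Q / 2 - C ≤ R →
        R ≤ c * (a ^ (ε / (ε - 1)) + a * C ^ (1 / ε) + κ) :=
  self_bounding_single_general ε hε1
end

section
/- Let ε ∈ (1,2]. There exists a constant c > 0, depending only on ε, such that for all nonnegative reals A, B, κ, C, Q and every real number R: if R ≤ A·Q^{1/ε} + B·Q^{1/3} + κ and R ≥ Q − C, then R ≤ c·( A^{ε/(ε−1)} + B^{3/2} + C^{1/ε}·(A^{ε/(ε−1)} + B^{3/2})^{1−1/ε} + κ ). -/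
/-!
Once `R > 0`, the constraint gives `Q ≤ R + C`, so by subadditivity of `x ↦ x ^ θ` the
hypothesis becomes `R ≤ A R^{1/ε} + A C^{1/ε} + B R^{1/3} + B C^{1/3} + κ`. Young's inequality
`z y^θ ≤ y + z^{1/(1-θ)}` absorbs the two `R`-terms into `R / 2` at the price of
`A^{ε/(ε-1)} + B^{3/2} =: S`. The corruption terms are bounded by `T := C^{1/ε} S^{1-1/ε}`
and `S + T`, since `A ≤ S^{1-1/ε}`, `B ≤ S^{2/3}`, and `S^{2/3} C^{1/3}` is a weighted
geometric mean of `S` and `T` because `1/3 ≤ 1/ε`.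
-/

namespace Real

theorem mul_rpow_le_add_rpow_inv_one_sub {z y θ : ℝ} (hz : 0 ≤ z) (hy : 0 ≤ y)
    (hθ0 : 0 ≤ θ) (hθ1 : θ < 1) : z * y ^ θ ≤ y + z ^ (1 - θ)⁻¹ := by
  have h1θ : 0 < 1 - θ := by linarith
  set t := z ^ (1 - θ)⁻¹
  set m := max y t
  have hz_eq : z = t ^ (1 - θ) := (rpow_inv_rpow hz h1θ.ne').symm
  have hm : 0 ≤ m := le_max_of_le_left hy
  calc z * y ^ θ ≤ m ^ (1 - θ) * m ^ θ := by
        rw [hz_eq]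
        gcongr
        · exact le_max_right _ _
        · exact le_max_left _ _
    _ = m := by rw [← rpow_add_of_nonneg hm h1θ.le hθ0, sub_add_cancel, rpow_one]
    _ ≤ y + t := max_le_add_of_nonneg hy (rpow_nonneg hz _)

theorem mul_rpow_le_of_le_add {z Q R C θ : ℝ} (hz : 0 ≤ z) (hQ : 0 ≤ Q) (hR : 0 ≤ R)
    (hC : 0 ≤ C) (hQRC : Q ≤ R + C) (hθ0 : 0 ≤ θ) (hθ1 : θ < 1) :
    z * Q ^ θ ≤ R + z ^ (1 - θ)⁻¹ + z * C ^ θ :=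
  calc z * Q ^ θ ≤ z * (R ^ θ + C ^ θ) := by
        gcongr
        exact (rpow_le_rpow hQ hQRC hθ0).trans (rpow_add_le_add_rpow hR hC hθ0 hθ1.le)
    _ ≤ R + z ^ (1 - θ)⁻¹ + z * C ^ θ := by
        rw [mul_add]
        linarith [mul_rpow_le_add_rpow_inv_one_sub hz hR hθ0 hθ1]

/-- `S ^ (1 - t) * C ^ t` is a weighted geometric mean of `S` and `C ^ θ * S ^ (1 - θ)`. -/
theorem rpow_one_sub_mul_rpow_le {S C t θ : ℝ} (hS : 0 ≤ S) (hC : 0 ≤ C) (ht : 0 ≤ t)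
    (htθ : t ≤ θ) (hθ1 : θ ≤ 1) : S ^ (1 - t) * C ^ t ≤ S + C ^ θ * S ^ (1 - θ) := by
  rcases ht.eq_or_lt with rfl | ht
  · simp [mul_nonneg, rpow_nonneg, hS, hC]
  have hθ : 0 < θ := ht.trans_le htθ
  set w := t / θ
  have hw0 : 0 ≤ w := by positivity
  have hw1 : w ≤ 1 := (div_le_one hθ).2 htθ
  have hwθ : θ * w = t := mul_div_cancel₀ t hθ.ne'
  have hT : 0 ≤ C ^ θ * S ^ (1 - θ) := by positivity
  have hexp : 1 - w + (1 - θ) * w = 1 - t := by rw [← hwθ]; ring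
  calc S ^ (1 - t) * C ^ t = S ^ (1 - w) * (C ^ θ * S ^ (1 - θ)) ^ w := by
        rw [mul_rpow (by positivity) (by positivity), ← rpow_mul hC, ← rpow_mul hS, hwθ,
          mul_left_comm, ← rpow_add_of_nonneg hS (by linarith) (by nlinarith), hexp, mul_comm]
    _ ≤ (1 - w) * S + w * (C ^ θ * S ^ (1 - θ)) :=
        geom_mean_le_arith_mean2_weighted (by linarith) hw0 hS hT (by ring)
    _ ≤ S + C ^ θ * S ^ (1 - θ) := by nlinarith

end Real

open Real in
/-- two-term self-bounding argument from the proof of Proposition 1.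
For `ε ∈ (1,2]` there is a constant `c > 0` depending only on `ε` such that for all
nonnegative `A, B, κ, C, Q` and real `R`: if `R ≤ A Q^{1/ε} + B Q^{1/3} + κ` and
`R ≥ Q − C`, then
`R ≤ c (A^{ε/(ε−1)} + B^{3/2} + C^{1/ε} (A^{ε/(ε−1)} + B^{3/2})^{1−1/ε} + κ)`. -/
theorem self_bounding_two_terms
    (ε : ℝ) (hε1 : 1 < ε) (hε2 : ε ≤ 2) :
    ∃ c : ℝ, 0 < c ∧
      ∀ A B κ C Q : ℝ, ∀ R : ℝ, 0 ≤ A → 0 ≤ B → 0 ≤ κ → 0 ≤ C → 0 ≤ Q →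
        R ≤ A * Q ^ (1 / ε) + B * Q ^ ((1 : ℝ) / 3) + κ → Q - C ≤ R →
        R ≤ c * (A ^ (ε / (ε - 1)) + B ^ ((3 : ℝ) / 2)
            + C ^ (1 / ε) * (A ^ (ε / (ε - 1)) + B ^ ((3 : ℝ) / 2)) ^ (1 - 1 / ε) + κ) := by
  set θ := 1 / ε
  have hθ : 1 / 2 ≤ θ ∧ θ < 1 := ⟨one_div_le_one_div_of_le (by linarith) hε2,
    (div_lt_one (by linarith)).2 hε1⟩
  set p := ε / (ε - 1)
  have hp : p = (1 - θ)⁻¹ := by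
    simp only [p, θ]
    field_simp
  have hp2 : 3 / 2 ≤ p := by rw [hp, le_inv_comm₀] <;> linarith
  refine ⟨4 ^ p + 8, by positivity, ?_⟩
  intro A B κ C Q R hA hB hκ hC hQ hRQ hQC
  set S := A ^ p + B ^ ((3 : ℝ) / 2)
  set T := C ^ θ * S ^ (1 - θ)
  have hS : 0 ≤ S := by positivity
  have hT : 0 ≤ T := by positivity
  rcases le_or_gt R 0 with hR | hR
  · exact hR.trans (by positivity)
  have hAS : A ≤ S ^ (1 - θ) := by
    rw [← inv_inv (1 - θ), ← hp, le_rpow_inv_iff_of_pos hA hS (by linarith)]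
    exact le_add_of_nonneg_right (by positivity)
  have hBS : B ≤ S ^ (1 - (1 : ℝ) / 3) := by
    rw [show (1 : ℝ) - 1 / 3 = (3 / 2)⁻¹ by norm_num, le_rpow_inv_iff_of_pos hB hS (by norm_num)]
    exact le_add_of_nonneg_left (by positivity)
  have hAQ := mul_rpow_le_of_le_add (z := 4 * A) (by positivity) hQ hR.le hC (by linarith)
    (by linarith) hθ.2
  have hBQ : 4 * B * Q ^ ((1 : ℝ) / 3)
      ≤ R + (4 * B) ^ ((3 : ℝ) / 2) + 4 * B * C ^ ((1 : ℝ) / 3) := by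
    have h := mul_rpow_le_of_le_add (z := 4 * B) (θ := 1 / 3) (by positivity) hQ hR.le hC
      (by linarith) (by norm_num) (by norm_num)
    rwa [show (1 : ℝ) - 1 / 3 = (3 / 2)⁻¹ by norm_num, inv_inv] at h
  have hAC : A * C ^ θ ≤ T := by
    rw [mul_comm]
    exact mul_le_mul_of_nonneg_left hAS (by positivity)
  have hBC : B * C ^ ((1 : ℝ) / 3) ≤ S + T :=
    (mul_le_mul_of_nonneg_right hBS (by positivity)).trans
      (rpow_one_sub_mul_rpow_le hS hC (by norm_num) (by linarith) hθ.2.le)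
  have h4A : (4 * A) ^ p = 4 ^ p * A ^ p := mul_rpow (by norm_num) hA
  have h4B : (4 * B) ^ ((3 : ℝ) / 2) ≤ 4 ^ p * B ^ ((3 : ℝ) / 2) := by
    rw [mul_rpow (by norm_num) hB]
    gcongr
    · norm_num
  rw [← hp] at hAQ
  have h4p : (0 : ℝ) ≤ 4 ^ p := by positivity
  have hR2 : 2 * R ≤ 4 ^ p * S + 4 * S + 8 * T + 4 * κ := by linarith
  nlinarith [mul_nonneg h4p hT, mul_nonneg h4p hκ]
end

section
/- Let A be a finite set with |A| ≥ 2, let α ∈ (0,1), and let q be a probability distribution on A (q_a ≥ 0, ∑_{a∈A} q_a = 1). Set q_* = min{max_{a∈A} q_a, 1 − max_{a∈A} q_a}. Then (1/α)·(∑_{a∈A} q_a^α − 1) ≥ ((1 − 2^{α−1})/α) · q_*^α ≥ ((1−α)/(4α)) · q_*^α. -/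
open Finset

private lemma rpow_add_le_add_rpow' {x y p : ℝ} (hx : 0 ≤ x) (hy : 0 ≤ y)
    (hp : 0 ≤ p) (hp1 : p ≤ 1) : (x + y) ^ p ≤ x ^ p + y ^ p := by
  have := NNReal.rpow_add_le_add_rpow ⟨x, hx⟩ ⟨y, hy⟩ hp hp1
  have h2 := NNReal.coe_le_coe.2 this
  push_cast [NNReal.coe_rpow] at h2
  exact h2

private lemma sum_rpow_ge {A : Type*} (s : Finset A) (f : A → ℝ) {p : ℝ}
    (hp : 0 < p) (hp1 : p ≤ 1) (hf : ∀ a ∈ s, 0 ≤ f a) :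
    (∑ a ∈ s, f a) ^ p ≤ ∑ a ∈ s, f a ^ p := by
  induction s using Finset.cons_induction with
  | empty => simp [Real.zero_rpow hp.ne']
  | cons a s ha ih =>
    rw [Finset.sum_cons, Finset.sum_cons]
    have h1 : (f a + ∑ b ∈ s, f b) ^ p ≤ f a ^ p + (∑ b ∈ s, f b) ^ p :=
      rpow_add_le_add_rpow' (hf a (Finset.mem_cons_self a s))
        (Finset.sum_nonneg fun b hb => hf b (Finset.mem_cons_of_mem hb)) hp.le hp1
    have h2 := ih (fun b hb => hf b (Finset.mem_cons_of_mem hb))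
    linarith

/-- Tsallis-entropy lower bound from the proof of Theorem 4.
For a finite set `A` with `|A| ≥ 2`, `α ∈ (0,1)`, and a probability distribution `q` on `A`,
with `q_* = min{max_a q_a, 1 − max_a q_a}`,
`(1/α)(∑_a q_a^α − 1) ≥ ((1 − 2^{α−1})/α) q_*^α ≥ ((1−α)/(4α)) q_*^α`. -/
theorem tsallis_entropy_lower_bound
    {A : Type*} [Fintype A] [Nonempty A] (hA : 2 ≤ Fintype.card A)
    (α : ℝ) (hα0 : 0 < α) (hα1 : α < 1)
    (q : A → ℝ) (hq0 : ∀ a, 0 ≤ q a) (hq1 : ∑ a, q a = 1)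
    (qstar : ℝ)
    (hqstar : qstar = min (Finset.univ.sup' Finset.univ_nonempty q)
        (1 - Finset.univ.sup' Finset.univ_nonempty q)) :
    ((1 - (2 : ℝ) ^ (α - 1)) / α) * qstar ^ α ≤ (1 / α) * (∑ a, q a ^ α - 1) ∧
    ((1 - α) / (4 * α)) * qstar ^ α ≤ ((1 - (2 : ℝ) ^ (α - 1)) / α) * qstar ^ α := by
  classical
  set M : ℝ := Finset.univ.sup' Finset.univ_nonempty q with hMdef
  obtain ⟨a₀, -, hMa⟩ := Finset.exists_mem_eq_sup' Finset.univ_nonempty q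
  have hMq : M = q a₀ := hMa
  have hM0 : 0 ≤ M := hMq ▸ hq0 a₀
  have hM1 : M ≤ 1 := by
    rw [hMq, ← hq1]
    exact Finset.single_le_sum (fun a _ => hq0 a) (Finset.mem_univ a₀)
  -- basic facts about qstar
  have hm0 : 0 ≤ qstar := by
    rw [hqstar]; exact le_min hM0 (by linarith)
  have hm2 : qstar ≤ 1 / 2 := by
    rw [hqstar]
    rcases le_total M (1 - M) with h | h
    · calc min M (1-M) ≤ M := min_le_left _ _
      _ ≤ 1/2 := by linarith
    · calc min M (1-M) ≤ 1 - M := min_le_right _ _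
      _ ≤ 1/2 := by linarith
  -- 2^(α-1) bounds
  have h2pos : (0:ℝ) < (2:ℝ) ^ (α - 1) := Real.rpow_pos_of_pos two_pos _
  have hmαnn : 0 ≤ qstar ^ α := Real.rpow_nonneg hm0 α
  -- key: sum of q^α ≥ M^α + (1-M)^α
  have hsum_split : ∑ a ∈ (Finset.univ.erase a₀), q a = 1 - M := by
    have h := Finset.sum_erase_add Finset.univ q (Finset.mem_univ a₀)
    rw [hq1] at h
    rw [← hMq] at h
    linarith
  have hkey1 : M ^ α + (1 - M) ^ α ≤ ∑ a, q a ^ α := by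
    have hsplit := Finset.sum_erase_add Finset.univ (fun a => q a ^ α) (Finset.mem_univ a₀)
    have hsub : (1 - M) ^ α ≤ ∑ a ∈ (Finset.univ.erase a₀), q a ^ α := by
      rw [← hsum_split]
      exact sum_rpow_ge _ _ hα0 hα1.le (fun a _ => hq0 a)
    have : q a₀ ^ α = M ^ α := by rw [hMq]
    linarith [hsplit, hsub, this]
  -- M^α + (1-M)^α = qstar^α + (1-qstar)^α
  have hkey2 : M ^ α + (1 - M) ^ α = qstar ^ α + (1 - qstar) ^ α := by
    rw [hqstar]
    rcases min_cases M (1 - M) with ⟨h, -⟩ | ⟨h, -⟩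
    · rw [h]
    · rw [h, show (1:ℝ) - (1 - M) = M from by ring]
      exact add_comm _ _
  -- (1 - qstar)^α ≥ 1 - qstar
  have hkey3 : 1 - qstar ≤ (1 - qstar) ^ α := by
    have h1 : (0:ℝ) < 1 - qstar := by linarith
    have := Real.rpow_le_rpow_of_exponent_ge h1 (by linarith : 1 - qstar ≤ 1) hα1.le
    rwa [Real.rpow_one] at this
  -- qstar ≤ 2^(α-1) * qstar^α
  have hkey4 : qstar ≤ (2:ℝ) ^ (α - 1) * qstar ^ α := by
    rcases eq_or_lt_of_le hm0 with h | h
    · rw [← h, Real.zero_rpow hα0.ne', mul_zero]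
    · have e1 : qstar = qstar ^ (1 - α) * qstar ^ α := by
        rw [← Real.rpow_add h, sub_add_cancel, Real.rpow_one]
      have e2 : qstar ^ (1 - α) ≤ (2:ℝ) ^ (α - 1) := by
        have : qstar ^ (1 - α) ≤ (1/2 : ℝ) ^ (1 - α) :=
          Real.rpow_le_rpow hm0 hm2 (by linarith)
        have e3 : ((1:ℝ)/2) ^ (1 - α) = (2:ℝ) ^ (α - 1) := by
          rw [one_div, Real.inv_rpow (by norm_num : (0:ℝ) ≤ 2),
            ← Real.rpow_neg (by norm_num : (0:ℝ) ≤ 2), neg_sub]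
        rw [e3] at this
        exact this
      calc qstar = qstar ^ (1 - α) * qstar ^ α := e1
        _ ≤ (2:ℝ) ^ (α - 1) * qstar ^ α :=
          mul_le_mul_of_nonneg_right e2 hmαnn
  -- 2^α ≤ 1 + α and hence 2^(α-1) ≤ (1+α)/2
  have hbern : (2:ℝ) ^ α ≤ 1 + α := by
    have h := rpow_one_add_le_one_add_mul_self (by norm_num : (-1:ℝ) ≤ 1) hα0.le hα1.le
    rw [show (1:ℝ) + 1 = 2 from by norm_num, mul_one] at h
    exact h
  have h2half : (2:ℝ) ^ (α - 1) ≤ (1 + α) / 2 := by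
    have : (2:ℝ) ^ (α - 1) = (2:ℝ) ^ α / 2 := by
      rw [Real.rpow_sub two_pos, Real.rpow_one]
    rw [this]; linarith
  constructor
  · have key : (1 - (2:ℝ) ^ (α - 1)) * qstar ^ α ≤ (∑ a, q a ^ α) - 1 := by
      nlinarith [hkey1, hkey2, hkey3, hkey4]
    calc ((1 - (2:ℝ) ^ (α - 1)) / α) * qstar ^ α
        = ((1 - (2:ℝ) ^ (α - 1)) * qstar ^ α) / α := by ring
      _ ≤ ((∑ a, q a ^ α) - 1) / α := by
          exact (div_le_div_iff_of_pos_right hα0).mpr key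
      _ = (1 / α) * ((∑ a, q a ^ α) - 1) := by ring
  · apply mul_le_mul_of_nonneg_right _ hmαnn
    rw [div_le_div_iff₀ (by positivity) hα0]
    nlinarith [h2half, hα0, hα1]
end
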